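/- arXiv:2104.03937 — 10 statements merged into one kernel-verified Lean document; each statement's English description precedes it below -/
import Mathlib

section
/- If a graph G has at least one edge, then the proper thinness of G is at most the bandwidth of G. -/
/-- An ordering (given by an injective labeling `f`) is consistent with a partition
(given by a class function `c`): for `u < v < w` with `u, v` in the same class
and `wu` an edge, `wv` is also an edge. -/
def ConsistentWith {V : Type*} {K : Type*} (G : SimpleGraph V) (f : V → ℕ) (c : V → K) : Prop :=
  ∀ u v w : V, f u < f v → f v < f w → c u = c v → G.Adj w u → G.Adj w v

/-- The reverse of the ordering given by `f` is consistent with the partition `c`. -/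
def RevConsistentWith {V : Type*} {K : Type*} (G : SimpleGraph V) (f : V → ℕ) (c : V → K) : Prop :=
  ∀ u v w : V, f u < f v → f v < f w → c v = c w → G.Adj u w → G.Adj u v

/-- The proper thinness of `G`: the least `k` such that `G` admits a vertex ordering
and a partition into `k` classes with both the ordering and its reverse consistent. -/
noncomputable def pthin {V : Type*} (G : SimpleGraph V) : ℕ :=
  sInf {k | ∃ f : V → ℕ, Function.Injective f ∧
    ∃ c : V → Fin k, ConsistentWith G f c ∧ RevConsistentWith G f c}

/-- The bandwidth of `G`: the least `b` such that there is an injective labeling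
`f : V → ℤ` with `|f u - f v| ≤ b` over all edges `uv`. -/
noncomputable def bandwidth {V : Type*} (G : SimpleGraph V) : ℕ :=
  sInf {b | ∃ f : V → ℤ, Function.Injective f ∧
    ∀ u v : V, G.Adj u v → (f u - f v).natAbs ≤ b}

/-!
Order the vertices by a labeling realizing the bandwidth `b > 0` and partition them by the
residue of their label mod `b`. Two vertices of the same class are at least `b` apart, so no edge
jumps over such a pair: both consistency conditions hold vacuously.
-/

open Function

section

variable {V : Type*} (G : SimpleGraph V)

theorem exists_labeling_bandwidth [Finite V] :
    ∃ f : V → ℤ, Injective f ∧ ∀ u v : V, G.Adj u v → (f u - f v).natAbs ≤ bandwidth G := by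
  obtain ⟨f, hf⟩ := Countable.exists_injective_nat' (α := V)
  obtain ⟨b, hb⟩ := (Set.finite_range fun p : V × V => ((f p.1 : ℤ) - f p.2).natAbs).bddAbove
  refine Nat.sInf_mem (s := {b | ∃ f : V → ℤ, Injective f ∧
    ∀ u v : V, G.Adj u v → (f u - f v).natAbs ≤ b}) ⟨b, (↑) ∘ f, Nat.cast_injective.comp hf, ?_⟩
  exact fun u v _ => hb ⟨(u, v), rfl⟩

theorem bandwidth_pos [Finite V] {x y : V} (hxy : G.Adj x y) : 0 < bandwidth G := by
  obtain ⟨f, hf, hbw⟩ := exists_labeling_bandwidth G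
  have := hbw x y hxy
  have : f x ≠ f y := hf.ne hxy.ne
  omega

theorem exists_nat_labeling_sub_eq {f : V → ℤ} (hf : BddBelow (Set.range f)) :
    ∃ g : V → ℕ, ∀ u v : V, (g u : ℤ) - g v = f u - f v := by
  obtain ⟨m, hm⟩ := hf
  refine ⟨fun v => (f v - m).toNat, fun u v => ?_⟩
  have hu : m ≤ f u := hm ⟨u, rfl⟩
  have hv : m ≤ f v := hm ⟨v, rfl⟩
  simp only
  omega

section Separated

variable {G} {K : Type*} {f : V → ℕ} {c : V → K} {b : ℕ}
  (hsep : ∀ u v : V, c u = c v → f u < f v → f u + b ≤ f v)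
  (hadj : ∀ u v : V, G.Adj u v → f v ≤ f u + b)
include hsep hadj

theorem consistentWith_of_separated : ConsistentWith G f c := by
  intro u v w huv hvw hc hwu
  have := hsep u v hc huv
  have := hadj u w hwu.symm
  omega

theorem revConsistentWith_of_separated : RevConsistentWith G f c := by
  intro u v w huv hvw hc huw
  have := hsep v w hc hvw
  have := hadj u w huw
  omega

end Separated

theorem pthin_le_of_labeling {f : V → ℕ} (hf : Injective f) {b : ℕ} (hb : 0 < b)
    (hadj : ∀ u v : V, G.Adj u v → f v ≤ f u + b) : pthin G ≤ b := by
  let c : V → Fin b := fun v => ⟨f v % b, Nat.mod_lt _ hb⟩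
  have hsep : ∀ u v : V, c u = c v → f u < f v → f u + b ≤ f v := fun u v hc =>
    Nat.ModEq.add_le_of_lt (congrArg Fin.val hc)
  exact Nat.sInf_le ⟨f, hf, c, consistentWith_of_separated hsep hadj,
    revConsistentWith_of_separated hsep hadj⟩

end

/-- If a graph `G` has at least one edge, then the proper thinness of `G` is at most
its bandwidth. -/
theorem pthin_le_bandwidth {V : Type*} [Fintype V] (G : SimpleGraph V)
    (h : ∃ u v : V, G.Adj u v) : pthin G ≤ bandwidth G := by
  obtain ⟨x, y, hxy⟩ := h
  obtain ⟨f, hf, hbw⟩ := exists_labeling_bandwidth G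
  obtain ⟨g, hg⟩ := exists_nat_labeling_sub_eq (Set.finite_range f).bddBelow
  have hg_inj : Injective g := fun u v huv => hf (by linarith [hg u v, congrArg ((↑) : ℕ → ℤ) huv])
  refine pthin_le_of_labeling G hg_inj (bandwidth_pos G hxy) fun u v huv => ?_
  have := hbw u v huv
  have := hg u v
  omega
end

section
/- For every graph G, the independent thinness of G is at most its pathwidth plus one. -/
noncomputable def indthin {V : Type*} (G : SimpleGraph V) : ℕ :=
  sInf {k | ∃ f : V → ℕ, Function.Injective f ∧
    ∃ c : V → Fin k, ConsistentWith G f c ∧ ∀ u v : V, c u = c v → ¬ G.Adj u v}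

def IsPathDecomp {V : Type*} (G : SimpleGraph V) {r : ℕ} (X : Fin r → Finset V) : Prop :=
  (∀ v : V, ∃ i, v ∈ X i) ∧
  (∀ u v : V, G.Adj u v → ∃ i, u ∈ X i ∧ v ∈ X i) ∧
  (∀ v : V, ∀ i j k : Fin r, i ≤ j → j ≤ k → v ∈ X i → v ∈ X k → v ∈ X j)

noncomputable def pathwidth {V : Type*} (G : SimpleGraph V) : ℕ :=
  sInf {w | ∃ (r : ℕ) (X : Fin r → Finset V), IsPathDecomp G X ∧ ∀ i, (X i).card ≤ w + 1}

open Finset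

section

variable {V : Type*}

theorem SimpleGraph.colorable_succ_of_card_earlier_adj_le [Fintype V] (H : SimpleGraph V)
    [DecidableRel H.Adj] {α : Type*} [LinearOrder α] {f : V → α} (hf : Function.Injective f)
    {k : ℕ} (hk : ∀ v, #{u | f u < f v ∧ H.Adj u v} ≤ k) : H.Colorable (k + 1) := by
  classical
  suffices ∀ s : Finset V, ∃ c : V → Fin (k + 1), ∀ u ∈ s, ∀ v ∈ s, H.Adj u v → c u ≠ c v by
    obtain ⟨c, hc⟩ := this univ
    exact ⟨Coloring.mk c fun {u v} huv => hc u (mem_univ u) v (mem_univ v) huv⟩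
  intro s
  induction s using Finset.induction_on_max_value f with
  | empty => exact ⟨0, by simp⟩
  | insert a s ha hmax ih =>
    obtain ⟨c, hc⟩ := ih
    have hused : #((s.filter (H.Adj a)).image c) < k + 1 := by
      calc _ ≤ #(s.filter (H.Adj a)) := card_image_le
        _ ≤ #{u | f u < f a ∧ H.Adj u a} := by
          refine card_le_card fun u hu => ?_
          obtain ⟨hus, hau⟩ := mem_filter.1 hu
          have hne : f u ≠ f a := hf.ne (ne_of_mem_of_not_mem hus ha)
          simpa using ⟨lt_of_le_of_ne (hmax u hus) hne, hau.symm⟩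
        _ < k + 1 := Nat.lt_succ_of_le (hk a)
    obtain ⟨m, -, hm⟩ := exists_mem_notMem_of_card_lt_card
      (hused.trans_eq (card_fin (k + 1)).symm : _ < #(univ : Finset (Fin (k + 1))))
    have hma : ∀ v ∈ s, H.Adj a v → m ≠ c v := fun v hv hav hmv =>
      hm (mem_image.2 ⟨v, mem_filter.2 ⟨hv, hav⟩, hmv.symm⟩)
    refine ⟨Function.update c a m, ?_⟩
    intro u hu v hv huv
    rw [mem_insert] at hu hv
    rcases hu with rfl | hu <;> rcases hv with rfl | hv
    · exact (H.irrefl huv).elim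
    · simpa [Function.update_apply, (ne_of_mem_of_not_mem hv ha)] using hma v hv huv
    · simpa [Function.update_apply, (ne_of_mem_of_not_mem hu ha)] using (hma u hu huv.symm).symm
    · simpa [Function.update_apply, ne_of_mem_of_not_mem hu ha, ne_of_mem_of_not_mem hv ha]
        using hc u hu v hv huv

theorem exists_injective_le_imp_le [Fintype V] (l : V → ℕ) :
    ∃ f : V → ℕ, Function.Injective f ∧ ∀ u v, f u ≤ f v → l u ≤ l v := by
  set N := Fintype.card V
  let e := Fintype.equivFin V
  have hdiv (v : V) : (e v + N * l v) / N = l v := by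
    rw [Nat.add_mul_div_left _ _ (Fin.pos (e v)), Nat.div_eq_of_lt (e v).isLt, zero_add]
  refine ⟨fun v => e v + N * l v, fun u v huv => e.injective (Fin.ext ?_), fun u v huv => ?_⟩
  · have hmod (v : V) : (e v + N * l v) % N = e v := by
      rw [Nat.add_mul_mod_self_left, Nat.mod_eq_of_lt (e v).isLt]
    simpa only [hmod] using congrArg (· % N) huv
  · simpa only [hdiv] using Nat.div_le_div_right (c := N) huv

theorem indthin_le_of_forall_not_adj {G : SimpleGraph V} {f : V → ℕ} (hf : Function.Injective f)
    {k : ℕ} (c : V → Fin k) (hc : ∀ u v x, f u < f v → f v ≤ f x → c u = c v → ¬ G.Adj x u) :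
    indthin G ≤ k := by
  refine Nat.sInf_le ⟨f, hf, c, fun u v x huv hvx hcuv hxu => (hc u v x huv hvx.le hcuv hxu).elim,
    fun u v hcuv huv => ?_⟩
  rcases lt_trichotomy (f u) (f v) with h | h | h
  · exact hc u v v h le_rfl hcuv huv.symm
  · exact G.ne_of_adj huv (hf h)
  · exact hc v u u h le_rfl hcuv.symm huv

theorem exists_isPathDecomp_card_le_pathwidth [Fintype V] (G : SimpleGraph V) :
    ∃ (r : ℕ) (X : Fin r → Finset V), IsPathDecomp G X ∧ ∀ i, #(X i) ≤ pathwidth G + 1 := by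
  refine Nat.sInf_mem (s := {w | ∃ (r : ℕ) (X : Fin r → Finset V), IsPathDecomp G X ∧
    ∀ i, #(X i) ≤ w + 1}) ?_
  exact ⟨Fintype.card V, 1, fun _ => univ,
    ⟨fun v => ⟨0, mem_univ v⟩, fun u v _ => ⟨0, mem_univ u, mem_univ v⟩,
      fun v _ _ _ _ _ _ _ => mem_univ v⟩, fun _ => by simp⟩

def bagGraph {r : ℕ} (X : Fin r → Finset V) : SimpleGraph V :=
  SimpleGraph.fromRel fun u v => ∃ i, u ∈ X i ∧ v ∈ X i

namespace IsPathDecomp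

variable {G : SimpleGraph V} {r : ℕ} {X : Fin r → Finset V}

theorem exists_firstBag (hX : IsPathDecomp G X) :
    ∃ l : V → Fin r, (∀ v, v ∈ X (l v)) ∧ ∀ v i, v ∈ X i → l v ≤ i := by
  choose l hl hmin using fun v => wellFounded_lt.has_min {i | v ∈ X i} (hX.1 v)
  exact ⟨l, hl, fun v i hi => not_lt.1 (hmin v i hi)⟩

theorem indthin_le [Fintype V] (hX : IsPathDecomp G X) {w : ℕ} (hw : ∀ i, #(X i) ≤ w + 1) :
    indthin G ≤ w + 1 := by
  classical
  obtain ⟨l, hl, hlmin⟩ := hX.exists_firstBag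
  obtain ⟨f, hf, hfl⟩ := exists_injective_le_imp_le fun v => (l v : ℕ)
  have mem_firstBag : ∀ u v i, f u ≤ f v → l v ≤ i → u ∈ X i → u ∈ X (l v) :=
    fun u v i huv hvi hu => hX.2.2 u (l u) (l v) i (hfl u v huv) hvi (hl u) hu
  have hcard (v : V) : #{u | f u < f v ∧ (bagGraph X).Adj u v} ≤ w := by
    calc #{u | f u < f v ∧ (bagGraph X).Adj u v} ≤ #((X (l v)).erase v) := by
          refine card_le_card fun u hu => ?_
          obtain ⟨huv, hne, hbag⟩ := by simpa [bagGraph] using hu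
          rcases hbag with ⟨i, hu, hv⟩ | ⟨i, hv, hu⟩ <;>
            exact mem_erase.2 ⟨hne, mem_firstBag u v i huv.le (hlmin v i hv) hu⟩
      _ = #(X (l v)) - 1 := card_erase_of_mem (hl v)
      _ ≤ w := Nat.sub_le_of_le_add (hw (l v))
  obtain ⟨c⟩ := (bagGraph X).colorable_succ_of_card_earlier_adj_le hf hcard
  refine indthin_le_of_forall_not_adj hf c fun u v x huv hvx hcuv hxu => ?_
  obtain ⟨i, hx, hu⟩ := hX.2.1 x u hxu
  have hu' : u ∈ X (l v) := mem_firstBag u v i huv.le ((hfl v x hvx).trans (hlmin x i hx)) hu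
  exact c.valid ((SimpleGraph.fromRel_adj _ _ _).2
    ⟨ne_of_apply_ne f huv.ne, .inl ⟨l v, hu', hl v⟩⟩) hcuv

end IsPathDecomp

end

/-- For every graph `G`, the independent thinness of `G` is at most its pathwidth plus one. -/
theorem indthin_le_pathwidth_add_one {V : Type*} [Fintype V] (G : SimpleGraph V) :
    indthin G ≤ pathwidth G + 1 := by
  obtain ⟨r, X, hX, hw⟩ := exists_isPathDecomp_card_le_pathwidth G
  exact hX.indthin_le hw
end

section
/- For every graph G, the proper independent thinness of G is at most its bandwidth plus one. -/
/-- The proper independent thinness of `G`: the least `k` such that `G` admits an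
ordering and a partition into `k` independent classes with both the ordering and
its reverse consistent with the partition. -/
noncomputable def indpthin {V : Type*} (G : SimpleGraph V) : ℕ :=
  sInf {k | ∃ f : V → ℕ, Function.Injective f ∧
    ∃ c : V → Fin k, ConsistentWith G f c ∧ RevConsistentWith G f c ∧
      ∀ u v : V, c u = c v → ¬ G.Adj u v}

section

variable {V : Type*} (G : SimpleGraph V)

theorem exists_injective_natAbs_sub_le_bandwidth [Finite V] :
    ∃ f : V → ℤ, Function.Injective f ∧
      ∀ u v : V, G.Adj u v → (f u - f v).natAbs ≤ bandwidth G := by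
  refine Nat.sInf_mem (s := {b | ∃ f : V → ℤ, Function.Injective f ∧
    ∀ u v : V, G.Adj u v → (f u - f v).natAbs ≤ b}) ?_
  obtain ⟨n, ⟨e⟩⟩ := Finite.exists_equiv_fin V
  refine ⟨n, fun v => (e v : ℕ), Nat.cast_injective.comp (Fin.val_injective.comp e.injective),
    fun u v _ => ?_⟩
  have := (e u).isLt
  have := (e v).isLt
  dsimp only
  omega

theorem exists_nat_shift_of_finite [Finite V] (f : V → ℤ) :
    ∃ (g : V → ℕ) (m : ℤ), ∀ v, (g v : ℤ) = f v - m := by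
  obtain ⟨m, hm⟩ := (Set.finite_range f).bddBelow
  exact ⟨fun v => (f v - m).toNat, m,
    fun v => Int.toNat_of_nonneg (sub_nonneg.mpr (hm (Set.mem_range_self v)))⟩

variable {G}

theorem add_lt_of_modEq_of_lt {f : V → ℕ} {b : ℕ} {u v : V}
    (hmod : f u ≡ f v [MOD b + 1]) (hlt : f u < f v) : f u + b < f v := by
  have hdvd := (Nat.modEq_iff_dvd' hlt.le).mp hmod
  have := Nat.le_of_dvd (Nat.sub_pos_of_lt hlt) hdvd
  omega

theorem indpthin_le_of_adj_le_add (f : V → ℕ) (hf : Function.Injective f) (b : ℕ)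
    (hb : ∀ u v, G.Adj u v → f v ≤ f u + b) : indpthin G ≤ b + 1 := by
  refine Nat.sInf_le ⟨f, hf, fun v => ⟨f v % (b + 1), Nat.mod_lt _ b.succ_pos⟩, ?_, ?_, ?_⟩
  · intro u v w huv hvw hc hwu
    have := add_lt_of_modEq_of_lt (congrArg Fin.val hc) huv
    have := hb u w hwu.symm
    omega
  · intro u v w huv hvw hc huw
    have := add_lt_of_modEq_of_lt (congrArg Fin.val hc) hvw
    have := hb u w huw
    omega
  · intro u v hc huv
    rcases lt_or_gt_of_ne (hf.ne huv.ne) with hlt | hlt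
    · have := add_lt_of_modEq_of_lt (congrArg Fin.val hc) hlt
      have := hb u v huv
      omega
    · have := add_lt_of_modEq_of_lt (congrArg Fin.val hc).symm hlt
      have := hb v u huv.symm
      omega

end

/-- For every graph `G`, the proper independent thinness of `G` is at most its
bandwidth plus one. -/
theorem indpthin_le_bandwidth_add_one {V : Type*} [Fintype V] (G : SimpleGraph V) :
    indpthin G ≤ bandwidth G + 1 := by
  obtain ⟨f, hf, hbw⟩ := exists_injective_natAbs_sub_le_bandwidth G
  obtain ⟨g, m, hg⟩ := exists_nat_shift_of_finite f
  refine indpthin_le_of_adj_le_add g (fun u v huv => hf ?_) _ fun u v huv => ?_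
  · have := hg u
    have := hg v
    omega
  · have := hbw u v huv
    have := hg u
    have := hg v
    omega
end

section
/- For every connected graph G, the proper thinness of G is at most |V(G)| minus the diameter of G. -/
open Finset

theorem pthin_le_of_adj_le_add {V : Type*} (G : SimpleGraph V) {f : V → ℕ} {b : ℕ}
    (hb : 0 < b) (hf : Function.Injective f)
    (hband : ∀ x y, G.Adj x y → f x < f y → f y ≤ f x + b) : pthin G ≤ b := by
  have hgap : ∀ s t : ℕ, s % b = t % b → s < t → s + b ≤ t := fun s t hst hlt ↦ by
    have := Nat.le_of_dvd (by omega) ((Nat.modEq_iff_dvd' hlt.le).mp hst)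
    omega
  refine Nat.sInf_le ⟨f, hf, fun v ↦ ⟨f v % b, Nat.mod_lt _ hb⟩, ?_, ?_⟩
  · intro x y z hxy hyz hc hzx
    have := hgap _ _ (congrArg Fin.val hc) hxy
    have := hband x z hzx.symm (hxy.trans hyz)
    omega
  · intro x y z hxy hyz hc hxz
    have := hgap _ _ (congrArg Fin.val hc) hyz
    have := hband x z hxz (hxy.trans hyz)
    omega

theorem Finset.card_filter_mem_add_card_sdiff_le {V β : Type*} [Fintype V] [DecidableEq β]
    (d : V → β) (s t : Finset β) (hs : ∀ j ∈ s, ∃ w, d w = j) :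
    #{w | d w ∈ t} + #(s \ t) ≤ Fintype.card V := by
  have hsurj : #(s \ t) ≤ #{w | d w ∉ t} :=
    card_le_card_of_surjOn d fun j hj ↦ by
      obtain ⟨hjs, hjt⟩ := mem_sdiff.mp hj
      obtain ⟨w, rfl⟩ := hs j hjs
      exact ⟨w, by simpa using hjt, rfl⟩
  have := card_filter_add_card_filter_not (s := univ) (fun w ↦ d w ∈ t)
  rw [card_univ] at this
  omega

section rankBy

variable {V α : Type*} [Fintype V] [LinearOrder α] (K : V → α)

def rankBy (w : V) : ℕ := #{x | K x < K w}

variable {K}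

theorem rankBy_le_rankBy {x y : V} (h : K x ≤ K y) : rankBy K x ≤ rankBy K y :=
  card_le_card fun w ↦ by simpa using fun hw ↦ hw.trans_le h

theorem rankBy_lt_rankBy {x y : V} (h : K x < K y) : rankBy K x < rankBy K y := by
  refine card_lt_card ((ssubset_iff_of_subset fun w ↦ ?_).mpr ⟨x, ?_, ?_⟩)
  · simpa using fun hw ↦ hw.trans h
  · simpa using h
  · simp

theorem rankBy_injective (hK : Function.Injective K) : Function.Injective (rankBy K) := by
  intro x y h
  by_contra hne
  rcases (hK.ne hne).lt_or_gt with hlt | hlt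
  · exact (rankBy_lt_rankBy hlt).ne h
  · exact (rankBy_lt_rankBy hlt).ne' h

theorem rankBy_le_add_card (x y : V) :
    rankBy K y ≤ rankBy K x + #{w | K x ≤ K w ∧ K w < K y} := by
  classical
  refine (card_le_card fun w ↦ ?_).trans (card_union_le _ _)
  simp only [mem_filter, mem_univ, true_and, mem_union]
  intro hw
  exact (lt_or_ge (K w) (K x)).imp id fun h ↦ ⟨h, hw⟩

end rankBy

namespace SimpleGraph

variable {V β : Type*} (G : SimpleGraph V)

theorem exists_dist_eq_of_le_dist {u v : V} {j : ℕ} (hj : j ≤ G.dist u v) :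
    ∃ w, G.dist u w = j := by
  rcases eq_or_ne (G.dist u v) 0 with h | h
  · exact ⟨u, by rw [dist_self]; omega⟩
  obtain ⟨p, hp⟩ := G.exists_walk_of_dist_ne_zero h
  refine ⟨p.getVert j, le_antisymm ?_ ?_⟩
  · calc G.dist u (p.getVert j) ≤ (p.take j).length := dist_le _
      _ ≤ j := by rw [Walk.take_length]; omega
  · have hdrop := dist_le (p.drop j)
    have htri := (p.take j).reachable.dist_triangle_left v
    rw [Walk.drop_length] at hdrop
    omega

noncomputable def bfsKey [LinearOrder β] (u : V) (g : V → β) (w : V) : ℕ ×ₗ β :=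
  toLex (G.dist u w, g w)

variable {G} [LinearOrder β] {u : V} {g : V → β}

theorem bfsKey_injective (hg : Function.Injective g) : Function.Injective (G.bfsKey u g) :=
  fun _ _ h ↦ hg (Prod.ext_iff.mp (toLex.injective h)).2

theorem dist_le_dist_of_bfsKey_le {x y : V} (h : G.bfsKey u g x ≤ G.bfsKey u g y) :
    G.dist u x ≤ G.dist u y := by
  rcases Prod.Lex.le_iff.mp h with h | ⟨h, -⟩ <;> exact h.le

variable [Fintype V]

theorem rankBy_bfsKey_le_of_adj {D : ℕ} (hlayer : ∀ j ≤ D, ∃ w, G.dist u w = j) {x y : V}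
    (hxy : G.Adj x y) (hlt : rankBy (G.bfsKey u g) x < rankBy (G.bfsKey u g) y) :
    rankBy (G.bfsKey u g) y ≤ rankBy (G.bfsKey u g) x + (Fintype.card V - D) := by
  set K := G.bfsKey u g
  have hK : K x < K y := lt_of_not_ge fun h ↦ hlt.not_ge (rankBy_le_rankBy h)
  have hdxy := dist_le_dist_of_bfsKey_le hK.le
  have hdyx : G.dist u y ≤ G.dist u x + 1 := by
    rcases hxy.diff_dist_adj (u := u) with h | h | h <;> omega
  -- The vertices from `x` up to `y` lie in the layers `dist u x` and `dist u x + 1`, whereas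
  -- each of the other `D - 1` layers below `D` is nonempty.
  set t : Finset ℕ := {G.dist u x, G.dist u x + 1}
  have hspan : #{w | K x ≤ K w ∧ K w < K y} < #{w | G.dist u w ∈ t} := by
    refine card_lt_card <| (ssubset_iff_of_subset fun w ↦ ?_).mpr ⟨y, ?_, by simp⟩
    · simp only [mem_filter, mem_univ, true_and, t, mem_insert, mem_singleton]
      rintro ⟨hxw, hwy⟩
      have := dist_le_dist_of_bfsKey_le hxw
      have := dist_le_dist_of_bfsKey_le hwy.le
      omega
    · simp only [mem_filter, mem_univ, true_and, t, mem_insert, mem_singleton]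
      omega
  have hlayers := card_filter_mem_add_card_sdiff_le (G.dist u) (range (D + 1)) t
    (fun j hj ↦ hlayer j (by simpa [Nat.lt_succ_iff] using hj))
  have hrest : #(range (D + 1)) - #t ≤ #(range (D + 1) \ t) := le_card_sdiff _ _
  have := rankBy_le_add_card (K := K) x y
  have : #t ≤ 2 := card_le_two
  rw [card_range] at hrest
  omega

end SimpleGraph

/-- For every connected graph `G`, the proper thinness of `G` is at most
`|V(G)|` minus the diameter of `G`. -/
theorem pthin_le_card_sub_diam {V : Type*} [Fintype V] (G : SimpleGraph V)
    (hG : G.Connected) : pthin G ≤ Fintype.card V - G.diam := by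
  have : Nonempty V := hG.nonempty
  obtain ⟨u, v, huv⟩ := G.exists_dist_eq_diam
  have hlayer : ∀ j ≤ G.diam, ∃ w, G.dist u w = j :=
    fun j hj ↦ G.exists_dist_eq_of_le_dist (huv.symm ▸ hj)
  have hdiam : G.diam < Fintype.card V := by
    simpa [Nat.lt_succ_iff] using
      card_filter_mem_add_card_sdiff_le (G.dist u) (range (G.diam + 1)) ∅ (by simpa using hlayer)
  exact pthin_le_of_adj_le_add G (by omega)
    (rankBy_injective (SimpleGraph.bfsKey_injective (Fintype.equivFin V).injective))
    fun x y hxy hlt ↦ SimpleGraph.rankBy_bfsKey_le_of_adj hlayer hxy hlt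
end

section
/- Let G be a graph, Π = {V^1,...,V^k} a partition of V(G), and < a partial order on V(G) that is a total order consistent with Π when restricted to each V^j. Define the digraph D(G,Π,<) on V(G) with arcs: (1) v_i -> v_j for v_i in V^i, v_j in V^j, i ≠ j, whenever v_i v_j is not an edge of G and there exists v_j' in V^j with v_j' < v_j and v_i v_j' an edge of G; and (2) v -> v' whenever v < v'. Then a total ordering of V(G) is consistent with Π and extends < if and only if it is a topological ordering of D(G,Π,<). -/
/-- The arcs of the digraph `D(G, Π, <)`: `u → v` if `u < v`, or if `u, v` lie in
different classes, `uv` is a non-edge, and some `w` in the class of `v` with `w < v`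
is adjacent to `u`. -/
def DArc {V : Type*} {k : ℕ} (G : SimpleGraph V) (c : V → Fin k)
    (lt : V → V → Prop) (u v : V) : Prop :=
  lt u v ∨ (c u ≠ c v ∧ ¬ G.Adj u v ∧ ∃ w, c w = c v ∧ lt w v ∧ G.Adj u w)

open Function

section

variable {V : Type*} {lt : V → V → Prop} {f : V → ℕ}

theorem lt_of_map_lt_of_class_eq {K : Type*} {c : V → K}
    (htot : ∀ u v, c u = c v → u ≠ v → lt u v ∨ lt v u)
    (hext : ∀ u v, lt u v → f u < f v) {u v : V} (hcuv : c u = c v) (h : f u < f v) :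
    lt u v :=
  (htot u v hcuv (fun huv => h.ne (congrArg f huv))).resolve_right
    fun hvu => (hext v u hvu).asymm h

variable {k : ℕ} {G : SimpleGraph V} {c : V → Fin k}

theorem map_lt_of_darc (hf : Injective f) (hc : ConsistentWith G f c)
    (hext : ∀ u v, lt u v → f u < f v) {u v : V} (h : DArc G c lt u v) : f u < f v := by
  rcases h with h | ⟨hne, hnadj, w, hcw, hwv, hadj⟩
  · exact hext u v h
  · by_contra hvu
    have hne' : f v ≠ f u := hf.ne fun huv => hne (congrArg c huv.symm)
    exact hnadj (hc w v u (hext w v hwv) (lt_of_le_of_ne (not_lt.mp hvu) hne') hcw hadj)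

theorem consistentWith_of_map_lt_of_darc
    (htot : ∀ u v, c u = c v → u ≠ v → lt u v ∨ lt v u)
    (hcons : ∀ u v w, c u = c v → c v = c w → lt u v → lt v w → G.Adj w u → G.Adj w v)
    (htop : ∀ u v, DArc G c lt u v → f u < f v) : ConsistentWith G f c := by
  have hext : ∀ u v, lt u v → f u < f v := fun u v h => htop u v (Or.inl h)
  intro u v w huv hvw hcuv hadj
  have hlt_uv : lt u v := lt_of_map_lt_of_class_eq htot hext hcuv huv
  by_cases hcvw : c v = c w
  · exact hcons u v w hcuv hcvw hlt_uv (lt_of_map_lt_of_class_eq htot hext hcvw hvw) hadj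
  · by_contra hnadj
    exact (htop w v (Or.inr ⟨Ne.symm hcvw, hnadj, u, hcuv, hlt_uv, hadj⟩)).asymm hvw

end

theorem consistent_extending_iff_topological_general {V : Type*} {k : ℕ}
    (G : SimpleGraph V) (c : V → Fin k) (lt : V → V → Prop)
    (htot : ∀ u v, c u = c v → u ≠ v → lt u v ∨ lt v u)
    (hcons : ∀ u v w, c u = c v → c v = c w → lt u v → lt v w → G.Adj w u → G.Adj w v)
    (f : V → ℕ) (hf : Function.Injective f) :
    (ConsistentWith G f c ∧ ∀ u v, lt u v → f u < f v) ↔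
      (∀ u v, DArc G c lt u v → f u < f v) :=
  ⟨fun ⟨hc, hext⟩ _ _ => map_lt_of_darc hf hc hext,
    fun htop => ⟨consistentWith_of_map_lt_of_darc htot hcons htop,
      fun u v h => htop u v (Or.inl h)⟩⟩

/-- Let `Π` be a partition (given by `c`) and `<` (given by `lt`) a partial order on the
vertices that is total and consistent when restricted to each class. Then a total ordering
(given by an injective labeling `f`) is consistent with `Π` and extends `<` if and only if
it is a topological ordering of `D(G, Π, <)`. -/
theorem consistent_extending_iff_topological {V : Type*} [Fintype V] {k : ℕ}
    (G : SimpleGraph V) (c : V → Fin k) (lt : V → V → Prop)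
    (hirr : ∀ v, ¬ lt v v)
    (htrans : ∀ u v w, lt u v → lt v w → lt u w)
    (htot : ∀ u v, c u = c v → u ≠ v → lt u v ∨ lt v u)
    (hcons : ∀ u v w, c u = c v → c v = c w → lt u v → lt v w → G.Adj w u → G.Adj w v)
    (f : V → ℕ) (hf : Function.Injective f) :
    (ConsistentWith G f c ∧ ∀ u v, lt u v → f u < f v) ↔
      (∀ u v, DArc G c lt u v → f u < f v) :=
  consistent_extending_iff_topological_general G c lt htot hcons f hf
end

section
/- Let G be a graph, Π = {V^1,...,V^k} a partition of V(G), and < a partial order on V(G) that is a total order strongly consistent with Π when restricted to each V^j. Define the digraph D̃(G,Π,<) on V(G) with arcs: (1) v_i -> v_j for v_i in V^i, v_j in V^j, i ≠ j, whenever v_i v_j is not an edge of G and either there exists v_j' in V^j with v_j' < v_j and v_i v_j' an edge of G, or there exists v_i' in V^i with v_i < v_i' and v_i' v_j an edge of G; and (2) v -> v' whenever v < v'. Then a total ordering of V(G) is strongly consistent with Π and extends < if and only if it is a topological ordering of D̃(G,Π,<). -/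
/-- The arcs of the digraph `D̃(G, Π, <)`: `u → v` if `u < v`, or if `u, v` lie in
different classes, `uv` is a non-edge, and either some `w` in the class of `v` with
`w < v` is adjacent to `u`, or some `w` in the class of `u` with `u < w` is adjacent
to `v`. -/
def DtArc {V : Type*} {k : ℕ} (G : SimpleGraph V) (c : V → Fin k)
    (lt : V → V → Prop) (u v : V) : Prop :=
  lt u v ∨ (c u ≠ c v ∧ ¬ G.Adj u v ∧
    ((∃ w, c w = c v ∧ lt w v ∧ G.Adj u w) ∨ (∃ w, c w = c u ∧ lt u w ∧ G.Adj w v)))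

section

variable {V K : Type*} {c : V → K} {lt : V → V → Prop} {f : V → ℕ}

theorem lt_of_extends_of_label_lt (htot : ∀ u v, c u = c v → u ≠ v → lt u v ∨ lt v u)
    (hext : ∀ u v, lt u v → f u < f v) {u v : V} (hc : c u = c v) (h : f u < f v) :
    lt u v :=
  (htot u v hc fun huv => (huv ▸ h).false).resolve_right fun hvu => (hext v u hvu).asymm h

end

section

variable {V : Type*} {k : ℕ} {G : SimpleGraph V} {c : V → Fin k} {lt : V → V → Prop}
  {f : V → ℕ}

theorem DtArc.label_lt (hf : Function.Injective f) (hc : ConsistentWith G f c)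
    (hrc : RevConsistentWith G f c) (hext : ∀ u v, lt u v → f u < f v) {u v : V}
    (harc : DtArc G c lt u v) : f u < f v := by
  rcases harc with h | ⟨hne, hnadj, ⟨w, hcw, hlw, haw⟩ | ⟨w, hcw, hlw, haw⟩⟩
  · exact hext u v h
  all_goals
    refine lt_of_not_ge fun hvu => hnadj ?_
    replace hvu := hvu.lt_of_ne (hf.ne (ne_of_apply_ne c hne)).symm
  · exact hc w v u (hext w v hlw) hvu hcw haw
  · exact (hrc v u w hvu (hext u w hlw) hcw.symm haw.symm).symm

theorem consistentWith_of_topological (htot : ∀ u v, c u = c v → u ≠ v → lt u v ∨ lt v u)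
    (hcons : ∀ u v w, c u = c v → c v = c w → lt u v → lt v w → G.Adj w u → G.Adj w v)
    (htop : ∀ u v, DtArc G c lt u v → f u < f v) : ConsistentWith G f c := by
  have hext : ∀ u v, lt u v → f u < f v := fun u v h => htop u v (Or.inl h)
  intro u v w huv hvw hcuv hadj
  by_contra hnadj
  have hluv := lt_of_extends_of_label_lt htot hext hcuv huv
  by_cases hcwv : c w = c v
  · exact hnadj (hcons u v w hcuv hcwv.symm hluv
      (lt_of_extends_of_label_lt htot hext hcwv.symm hvw) hadj)
  · exact (htop w v (Or.inr ⟨hcwv, hnadj, Or.inl ⟨u, hcuv, hluv, hadj⟩⟩)).asymm hvw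

theorem revConsistentWith_of_topological (htot : ∀ u v, c u = c v → u ≠ v → lt u v ∨ lt v u)
    (hrcons : ∀ u v w, c u = c v → c v = c w → lt u v → lt v w → G.Adj u w → G.Adj u v)
    (htop : ∀ u v, DtArc G c lt u v → f u < f v) : RevConsistentWith G f c := by
  have hext : ∀ u v, lt u v → f u < f v := fun u v h => htop u v (Or.inl h)
  intro u v w huv hvw hcvw hadj
  by_contra hnadj
  have hlvw := lt_of_extends_of_label_lt htot hext hcvw hvw
  by_cases hcuv : c u = c v
  · exact hnadj (hrcons u v w hcuv hcvw
      (lt_of_extends_of_label_lt htot hext hcuv huv) hlvw hadj)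
  · exact (htop v u (Or.inr ⟨Ne.symm hcuv, fun h => hnadj h.symm,
      Or.inr ⟨w, hcvw.symm, hlvw, hadj.symm⟩⟩)).asymm huv

end

theorem strongly_consistent_extending_iff_topological_general {V : Type*} {k : ℕ}
    (G : SimpleGraph V) (c : V → Fin k) (lt : V → V → Prop)
    (htot : ∀ u v, c u = c v → u ≠ v → lt u v ∨ lt v u)
    (hcons : ∀ u v w, c u = c v → c v = c w → lt u v → lt v w → G.Adj w u → G.Adj w v)
    (hrcons : ∀ u v w, c u = c v → c v = c w → lt u v → lt v w → G.Adj u w → G.Adj u v)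
    (f : V → ℕ) (hf : Function.Injective f) :
    (ConsistentWith G f c ∧ RevConsistentWith G f c ∧ ∀ u v, lt u v → f u < f v) ↔
      (∀ u v, DtArc G c lt u v → f u < f v) :=
  ⟨fun ⟨hc, hrc, hext⟩ _ _ => DtArc.label_lt hf hc hrc hext,
    fun htop => ⟨consistentWith_of_topological htot hcons htop,
      revConsistentWith_of_topological htot hrcons htop, fun u v h => htop u v (Or.inl h)⟩⟩

/-- Let `Π` be a partition (given by `c`) and `<` (given by `lt`) a partial order that is
total and strongly consistent when restricted to each class. Then a total ordering (given
by an injective labeling `f`) is strongly consistent with `Π` and extends `<` if and only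
if it is a topological ordering of `D̃(G, Π, <)`. -/
theorem strongly_consistent_extending_iff_topological {V : Type*} [Fintype V] {k : ℕ}
    (G : SimpleGraph V) (c : V → Fin k) (lt : V → V → Prop)
    (hirr : ∀ v, ¬ lt v v)
    (htrans : ∀ u v w, lt u v → lt v w → lt u w)
    (htot : ∀ u v, c u = c v → u ≠ v → lt u v ∨ lt v u)
    (hcons : ∀ u v w, c u = c v → c v = c w → lt u v → lt v w → G.Adj w u → G.Adj w v)
    (hrcons : ∀ u v w, c u = c v → c v = c w → lt u v → lt v w → G.Adj u w → G.Adj u v)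
    (f : V → ℕ) (hf : Function.Injective f) :
    (ConsistentWith G f c ∧ RevConsistentWith G f c ∧ ∀ u v, lt u v → f u < f v) ↔
      (∀ u v, DtArc G c lt u v → f u < f v) :=
  strongly_consistent_extending_iff_topological_general G c lt htot hcons hrcons f hf
end

section
/- Every graph G with at least one edge satisfies thin(G) ≥ b_v(G)/Δ(G), where b_v(G) is the vertex isoperimetric peak and Δ(G) the maximum degree. Consequently, if G has maximum degree at most d and contains a (not necessarily induced) subgraph H with at least one edge and b_v(H) ≥ b, then thin(G) ≥ b/d. -/
/-- The thinness of `G`. -/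
noncomputable def thin {V : Type*} (G : SimpleGraph V) : ℕ :=
  sInf {k | ∃ f : V → ℕ, Function.Injective f ∧ ∃ c : V → Fin k, ConsistentWith G f c}

/-- The vertex isoperimetric peak of `G`:
`b_v(G) = max_s min_{|X| = s} |N(X) ∩ (V ∖ X)|`. -/
noncomputable def vertexIsoPeak {V : Type*} (G : SimpleGraph V) : ℕ :=
  sSup {m | ∃ s : ℕ, m = sInf {b | ∃ X : Set V, X.ncard = s ∧
    b = {v | v ∉ X ∧ ∃ u ∈ X, G.Adj u v}.ncard}}

/-- The maximum degree of `G`. -/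
noncomputable def maxDeg {V : Type*} (G : SimpleGraph V) : ℕ :=
  sSup {d | ∃ v : V, d = (G.neighborSet v).ncard}

/-!
Take an ordering `f` of `V` with a consistent partition into `thin G` classes. For each `s`, let
`X` be the first `s` vertices. If `w ∉ X` is adjacent to `u ∈ X`, consistency makes `w` adjacent
to the last vertex of `X` in the class of `u`; so the boundary of `X` lies in the neighbourhoods
of at most `thin G` vertices, and `b_v(G) ≤ thin(G) Δ(G)`. The bound for a subgraph `H` follows
since `b_v` grows with the edge set while `thin` and `Δ` do not grow on induced subgraphs.
-/

section

variable {V : Type*}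

def vertexBoundary (G : SimpleGraph V) (X : Set V) : Set V :=
  {v | v ∉ X ∧ ∃ u ∈ X, G.Adj u v}

noncomputable def minBoundary (G : SimpleGraph V) (s : ℕ) : ℕ :=
  sInf {b | ∃ X : Set V, X.ncard = s ∧ b = (vertexBoundary G X).ncard}

lemma ConsistentWith.comap {W K : Type*} {G : SimpleGraph V} {f : V → ℕ} {c : V → K}
    (hc : ConsistentWith G f c) (φ : W → V) : ConsistentWith (G.comap φ) (f ∘ φ) (c ∘ φ) :=
  fun u v w => hc (φ u) (φ v) (φ w)

lemma thin_le_of_consistentWith {G : SimpleGraph V} {k : ℕ} {f : V → ℕ} {c : V → Fin k}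
    (hf : Function.Injective f) (hc : ConsistentWith G f c) : thin G ≤ k :=
  Nat.sInf_le ⟨f, hf, c, hc⟩

lemma vertexBoundary_mono {H H' : SimpleGraph V} (h : H ≤ H') (X : Set V) :
    vertexBoundary H X ⊆ vertexBoundary H' X :=
  fun _ ⟨hvX, u, huX, huv⟩ => ⟨hvX, u, huX, h huv⟩

lemma minBoundary_le_ncard_vertexBoundary (G : SimpleGraph V) {s : ℕ} {X : Set V}
    (hX : X.ncard = s) : minBoundary G s ≤ (vertexBoundary G X).ncard :=
  Nat.sInf_le ⟨X, hX, rfl⟩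

lemma exists_minBoundary_eq (G : SimpleGraph V) {s : ℕ} {Y : Set V} (hY : Y.ncard = s) :
    ∃ X : Set V, X.ncard = s ∧ (vertexBoundary G X).ncard = minBoundary G s := by
  obtain ⟨X, hX, h⟩ := Nat.sInf_mem (s := {b | ∃ X : Set V, X.ncard = s ∧
    b = (vertexBoundary G X).ncard}) (Set.nonempty_of_mem ⟨Y, hY, rfl⟩)
  exact ⟨X, hX, h.symm⟩

lemma minBoundary_le_of_forall_exists (G : SimpleGraph V) {s n : ℕ}
    (h : ∀ Y : Set V, Y.ncard = s → ∃ X : Set V, X.ncard = s ∧ (vertexBoundary G X).ncard ≤ n) :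
    minBoundary G s ≤ n := by
  rcases Set.eq_empty_or_nonempty {b | ∃ X : Set V, X.ncard = s ∧
    b = (vertexBoundary G X).ncard} with hempty | ⟨_, Y, hY, -⟩
  · simp [minBoundary, hempty]
  · obtain ⟨X, hX, hXn⟩ := h Y hY
    exact (minBoundary_le_ncard_vertexBoundary G hX).trans hXn

lemma vertexIsoPeak_le {G : SimpleGraph V} {n : ℕ} (h : ∀ s, minBoundary G s ≤ n) :
    vertexIsoPeak G ≤ n :=
  csSup_le' (by rintro _ ⟨s, rfl⟩; exact h s)

lemma maxDeg_le {G : SimpleGraph V} {n : ℕ} (h : ∀ v, (G.neighborSet v).ncard ≤ n) :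
    maxDeg G ≤ n :=
  csSup_le' (by rintro _ ⟨v, rfl⟩; exact h v)

section Finite

variable [Finite V] (G : SimpleGraph V)

lemma exists_consistentWith_thin :
    ∃ f : V → ℕ, Function.Injective f ∧ ∃ c : V → Fin (thin G), ConsistentWith G f c := by
  obtain ⟨n, ⟨e⟩⟩ := Finite.exists_equiv_fin V
  refine Nat.sInf_mem (s := {k | ∃ f : V → ℕ, Function.Injective f ∧ ∃ c : V → Fin k,
    ConsistentWith G f c}) ⟨n, fun v => e v, Fin.val_injective.comp e.injective, e, ?_⟩
  intro u v w huv _ hc _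
  cases e.injective hc
  exact absurd huv (lt_irrefl _)

lemma thin_comap_le {W : Type*} (φ : W ↪ V) : thin (G.comap φ) ≤ thin G := by
  obtain ⟨f, hf, c, hc⟩ := exists_consistentWith_thin G
  exact thin_le_of_consistentWith (hf.comp φ.injective) (hc.comap φ)

lemma ncard_neighborSet_le_maxDeg (v : V) : (G.neighborSet v).ncard ≤ maxDeg G :=
  le_csSup ⟨Nat.card V, by rintro _ ⟨w, rfl⟩; exact Set.ncard_le_card _⟩ ⟨v, rfl⟩

lemma maxDeg_comap_le {W : Type*} (φ : W ↪ V) : maxDeg (G.comap φ) ≤ maxDeg G :=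
  maxDeg_le fun a => calc
    ((G.comap φ).neighborSet a).ncard = (φ '' (G.comap φ).neighborSet a).ncard :=
      (Set.ncard_image_of_injective _ φ.injective).symm
    _ ≤ (G.neighborSet (φ a)).ncard := Set.ncard_le_ncard (by rintro _ ⟨b, hb, rfl⟩; exact hb)
    _ ≤ maxDeg G := ncard_neighborSet_le_maxDeg G (φ a)

lemma ncard_biUnion_neighborSet_le (L : Finset V) :
    (⋃ u ∈ L, G.neighborSet u).ncard ≤ L.card * maxDeg G := calc
  _ ≤ ∑ u ∈ L, (G.neighborSet u).ncard := L.set_ncard_biUnion_le _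
  _ ≤ L.card • maxDeg G := L.sum_le_card_nsmul _ _ fun u _ => ncard_neighborSet_le_maxDeg G u
  _ = L.card * maxDeg G := smul_eq_mul ..

lemma exists_ncard_eq_forall_lt {f : V → ℕ} (hf : Function.Injective f) {s : ℕ}
    (hs : s ≤ Nat.card V) : ∃ X : Set V, X.ncard = s ∧ ∀ v ∈ X, ∀ w ∉ X, f v < f w := by
  induction s with
  | zero => exact ⟨∅, Set.ncard_empty V, by simp⟩
  | succ s ih =>
    obtain ⟨X, hXs, hXf⟩ := ih (Nat.le_of_succ_le hs)
    have hXc : Xᶜ.Nonempty := Set.nonempty_compl.2 fun hX => by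
      rw [hX, Set.ncard_univ] at hXs
      omega
    obtain ⟨w, hwX, hw⟩ := Xᶜ.exists_min_image f Xᶜ.toFinite hXc
    refine ⟨insert w X, by rw [Set.ncard_insert_of_notMem hwX, hXs], ?_⟩
    rintro v (rfl | hvX) w' hw'
    · rw [Set.mem_insert_iff, not_or] at hw'
      exact (hw w' hw'.2).lt_of_ne (hf.ne (Ne.symm hw'.1))
    · exact hXf v hvX w' fun h => hw' (Set.mem_insert_of_mem _ h)

lemma exists_vertexBoundary_subset_biUnion_neighborSet {K : Type*} [Fintype K]
    {f : V → ℕ} {c : V → K} (hf : Function.Injective f) (hc : ConsistentWith G f c)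
    {X : Set V} (hX : ∀ v ∈ X, ∀ w ∉ X, f v < f w) :
    ∃ L : Finset V, L.card ≤ Fintype.card K ∧ vertexBoundary G X ⊆ ⋃ u ∈ L, G.neighborSet u := by
  classical
  have := Fintype.ofFinite V
  set L := Finset.univ.filter fun u => u ∈ X ∧ ∀ u' ∈ X, c u' = c u → f u' ≤ f u
  refine ⟨L, Finset.card_le_card_of_injOn c (fun _ _ => Finset.mem_coe.2 (Finset.mem_univ _)) ?_, ?_⟩
  · intro u hu u' hu' hcu
    simp only [L, Finset.coe_filter, Finset.mem_univ, true_and, Set.mem_ofPred_eq] at hu hu'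
    exact hf ((hu'.2 u hu.1 hcu).antisymm (hu.2 u' hu'.1 hcu.symm))
  · rintro w ⟨hwX, u, huX, huw⟩
    obtain ⟨m, ⟨hmX, hmc⟩, hm⟩ :=
      {u' ∈ X | c u' = c u}.exists_max_image f (Set.toFinite _) ⟨u, huX, rfl⟩
    have hmL : m ∈ L := by
      simp only [L, Finset.mem_filter, Finset.mem_univ, true_and]
      exact ⟨hmX, fun u' hu'X hcu' => hm u' ⟨hu'X, hcu'.trans hmc⟩⟩
    refine Set.mem_biUnion hmL ?_
    rcases (hm u ⟨huX, rfl⟩).lt_or_eq with hlt | heq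
    · exact (hc u m w hlt (hX m hmX w hwX) hmc.symm huw.symm).symm
    · exact hf heq ▸ huw

lemma ncard_vertexBoundary_le_card_mul_maxDeg {K : Type*} [Fintype K]
    {f : V → ℕ} {c : V → K} (hf : Function.Injective f) (hc : ConsistentWith G f c)
    {X : Set V} (hX : ∀ v ∈ X, ∀ w ∉ X, f v < f w) :
    (vertexBoundary G X).ncard ≤ Fintype.card K * maxDeg G := by
  obtain ⟨L, hL, hcover⟩ := exists_vertexBoundary_subset_biUnion_neighborSet G hf hc hX
  calc (vertexBoundary G X).ncard ≤ (⋃ u ∈ L, G.neighborSet u).ncard := Set.ncard_le_ncard hcover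
    _ ≤ L.card * maxDeg G := ncard_biUnion_neighborSet_le G L
    _ ≤ Fintype.card K * maxDeg G := Nat.mul_le_mul_right _ hL

lemma minBoundary_mono {H H' : SimpleGraph V} (h : H ≤ H') (s : ℕ) :
    minBoundary H s ≤ minBoundary H' s :=
  minBoundary_le_of_forall_exists H fun _ hY => by
    obtain ⟨X, hX, hX'⟩ := exists_minBoundary_eq H' hY
    exact ⟨X, hX, hX' ▸ Set.ncard_le_ncard (vertexBoundary_mono h X)⟩

lemma minBoundary_le_vertexIsoPeak (s : ℕ) : minBoundary G s ≤ vertexIsoPeak G :=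
  le_csSup ⟨Nat.card V, by
    rintro _ ⟨t, rfl⟩
    exact minBoundary_le_of_forall_exists G fun Y hY => ⟨Y, hY, Set.ncard_le_card _⟩⟩ ⟨s, rfl⟩

lemma vertexIsoPeak_mono {H H' : SimpleGraph V} (h : H ≤ H') :
    vertexIsoPeak H ≤ vertexIsoPeak H' :=
  vertexIsoPeak_le fun s => (minBoundary_mono h s).trans (minBoundary_le_vertexIsoPeak H' s)

lemma vertexIsoPeak_le_card_mul_maxDeg {K : Type*} [Fintype K]
    {f : V → ℕ} {c : V → K} (hf : Function.Injective f) (hc : ConsistentWith G f c) :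
    vertexIsoPeak G ≤ Fintype.card K * maxDeg G :=
  vertexIsoPeak_le fun _ => minBoundary_le_of_forall_exists G fun Y hY => by
    obtain ⟨X, hX, hXf⟩ := exists_ncard_eq_forall_lt hf (hY ▸ Set.ncard_le_card Y)
    exact ⟨X, hX, ncard_vertexBoundary_le_card_mul_maxDeg G hf hc hXf⟩

lemma vertexIsoPeak_le_thin_mul_maxDeg : vertexIsoPeak G ≤ thin G * maxDeg G := by
  obtain ⟨f, hf, c, hc⟩ := exists_consistentWith_thin G
  simpa using vertexIsoPeak_le_card_mul_maxDeg G hf hc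

end Finite

end

/-- Every graph `G` with at least one edge satisfies `thin(G) ≥ b_v(G)/Δ(G)`.
Consequently, if `G` has maximum degree at most `d` and contains a (not necessarily
induced) subgraph `H` with at least one edge and `b_v(H) ≥ b`, then `thin(G) ≥ b/d`. -/
theorem thin_ge_iso_peak_div_maxDeg {V : Type*} [Fintype V] (G : SimpleGraph V) :
    ((∃ u v : V, G.Adj u v) →
      (vertexIsoPeak G : ℝ) / (maxDeg G : ℝ) ≤ (thin G : ℝ)) ∧
    (∀ (W : Type) (_ : Fintype W) (H : SimpleGraph W) (φ : W ↪ V),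
      (∀ a b : W, H.Adj a b → G.Adj (φ a) (φ b)) →
      (∃ a b : W, H.Adj a b) →
      ∀ d b : ℕ, maxDeg G ≤ d → b ≤ vertexIsoPeak H →
        (b : ℝ) / (d : ℝ) ≤ (thin G : ℝ)) := by
  refine ⟨fun _ => div_le_of_le_mul₀ (Nat.cast_nonneg _) (Nat.cast_nonneg _)
    (mod_cast vertexIsoPeak_le_thin_mul_maxDeg G), ?_⟩
  intro W _ H φ hHG _ d b hd hb
  have hH : H ≤ G.comap φ := fun a a' h => hHG a a' h
  refine div_le_of_le_mul₀ (Nat.cast_nonneg _) (Nat.cast_nonneg _) ?_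
  exact_mod_cast calc
    b ≤ vertexIsoPeak H := hb
    _ ≤ vertexIsoPeak (G.comap φ) := vertexIsoPeak_mono hH
    _ ≤ thin (G.comap φ) * maxDeg (G.comap φ) := vertexIsoPeak_le_thin_mul_maxDeg _
    _ ≤ thin G * d := Nat.mul_le_mul (thin_comap_le G φ) ((maxDeg_comap_le G φ).trans hd)
end

section
/- A graph is 2-thin if and only if it has a blocking 2-diagonal intersection model of axis-parallel rectangles in the plane. -/
/-- A graph is 2-thin if it admits a vertex ordering and a 2-class partition
consistent with it. -/
def TwoThin {V : Type*} (G : SimpleGraph V) : Prop :=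
  ∃ f : V → ℕ, Function.Injective f ∧ ∃ c : V → Fin 2, ConsistentWith G f c

/-- An axis-parallel box `[x1, x2] × [y1, y2]`, given by its coordinates. -/
structure Box where
  x1 : ℝ
  x2 : ℝ
  y1 : ℝ
  y2 : ℝ

/-- The set of points of a box. -/
def Box.toSet (b : Box) : Set (ℝ × ℝ) := Set.Icc b.x1 b.x2 ×ˢ Set.Icc b.y1 b.y2

/-- The vertical prolongation `[x1, x2] × ℝ` of a box. -/
def Box.vert (b : Box) : Set (ℝ × ℝ) := Set.Icc b.x1 b.x2 ×ˢ (Set.univ : Set ℝ)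

/-- The horizontal prolongation `ℝ × [y1, y2]` of a box. -/
def Box.horiz (b : Box) : Set (ℝ × ℝ) := (Set.univ : Set ℝ) ×ˢ Set.Icc b.y1 b.y2

/-- A family of boxes is 2-diagonal with diagonals `y = x + d1` (lower) and
`y = x + d2` (upper), `d1 < 0 < d2`: the upper-right corners are pairwise distinct and
each lies either on the lower diagonal within the 4th quadrant or on the upper
diagonal within the 2nd quadrant. -/
def TwoDiagonal {V : Type*} (box : V → Box) (d1 d2 : ℝ) : Prop :=
  d1 < 0 ∧ 0 < d2 ∧
  (∀ u v : V, u ≠ v → ((box u).x2, (box u).y2) ≠ ((box v).x2, (box v).y2)) ∧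
  ∀ v : V,
    ((box v).y2 = (box v).x2 + d1 ∧ 0 ≤ (box v).x2 ∧ (box v).y2 ≤ 0) ∨
    ((box v).y2 = (box v).x2 + d2 ∧ (box v).x2 ≤ 0 ∧ 0 ≤ (box v).y2)

/-- A 2-diagonal family of boxes is blocking if for every two non-intersecting boxes
`b1` (corner on the upper diagonal) and `b2` (corner on the lower diagonal), either the
vertical prolongation of `b1` intersects `b2` or the horizontal prolongation of `b2`
intersects `b1`. -/
def Blocking {V : Type*} (box : V → Box) (d1 d2 : ℝ) : Prop :=
  ∀ u v : V, (box u).y2 = (box u).x2 + d2 → (box v).y2 = (box v).x2 + d1 →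
    ¬ ((box u).toSet ∩ (box v).toSet).Nonempty →
    ((box u).vert ∩ (box v).toSet).Nonempty ∨ ((box v).horiz ∩ (box u).toSet).Nonempty

/-- `box` is a box intersection model of `G`: the boxes are nondegenerate and two
distinct vertices are adjacent iff their boxes intersect. -/
def IsBoxModel {V : Type*} (G : SimpleGraph V) (box : V → Box) : Prop :=
  (∀ v : V, (box v).x1 ≤ (box v).x2 ∧ (box v).y1 ≤ (box v).y2) ∧
  ∀ u v : V, u ≠ v → (G.Adj u v ↔ ((box u).toSet ∩ (box v).toSet).Nonempty)

/-!
Given a consistent ordering `f` with classes `0` and `1`, let `K` exceed every label and put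
the corner of `v` at `(f v, f v - K)` on the lower diagonal if `v` is in class `0`, and at
`(f v - K, f v)` on the upper diagonal otherwise; the box of `v` reaches left to the corner of
its earliest class-`1` neighbour and down to the corner of its earliest class-`0` neighbour.
For `u` before `v`, consistency makes "the earliest class-`c u` neighbour of `v` is not after
`u`" equivalent to adjacency, and this is exactly whether the box of `v` reaches that of `u`.

Conversely, take the two diagonals as the classes. Order the lower boxes by their corners and
put an upper box `w` right after the lower boxes whose top lies below the bottom of some upper
box with corner not right of that of `w`. Upper boxes then follow the order of their corners,
and blocking shows that a lower box placed before an upper box `w` starts left of the corner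
of `w`, while an upper box placed before a lower box `v` starts below the corner of `v`. Hence
a box meeting an earlier box also meets every box of the same class in between.
-/

open Finset Function

namespace Box

theorem toSet_inter_toSet_nonempty_iff (B C : Box) :
    (B.toSet ∩ C.toSet).Nonempty ↔
      max B.x1 C.x1 ≤ min B.x2 C.x2 ∧ max B.y1 C.y1 ≤ min B.y2 C.y2 := by
  simp only [toSet, Set.prod_inter_prod, Set.prod_nonempty_iff, Set.Icc_inter_Icc,
    Set.nonempty_Icc]

theorem toSet_inter_toSet_nonempty_iff_of_le {B C : Box} (hB : B.x1 ≤ B.x2 ∧ B.y1 ≤ B.y2)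
    (hC : C.x1 ≤ C.x2 ∧ C.y1 ≤ C.y2) :
    (B.toSet ∩ C.toSet).Nonempty ↔
      C.x1 ≤ B.x2 ∧ B.x1 ≤ C.x2 ∧ C.y1 ≤ B.y2 ∧ B.y1 ≤ C.y2 := by
  rw [toSet_inter_toSet_nonempty_iff]
  simp only [max_le_iff, le_min_iff]
  tauto

theorem vert_inter_toSet_nonempty_iff (B C : Box) :
    (B.vert ∩ C.toSet).Nonempty ↔ max B.x1 C.x1 ≤ min B.x2 C.x2 ∧ C.y1 ≤ C.y2 := by
  simp only [vert, toSet, Set.prod_inter_prod, Set.prod_nonempty_iff, Set.Icc_inter_Icc,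
    Set.nonempty_Icc, Set.univ_inter]

theorem horiz_inter_toSet_nonempty_iff (B C : Box) :
    (B.horiz ∩ C.toSet).Nonempty ↔ max B.y1 C.y1 ≤ min B.y2 C.y2 ∧ C.x1 ≤ C.x2 := by
  simp only [horiz, toSet, Set.prod_inter_prod, Set.prod_nonempty_iff, Set.Icc_inter_Icc,
    Set.nonempty_Icc, Set.univ_inter]
  exact and_comm

theorem toSet_subset_vert (B : Box) : B.toSet ⊆ B.vert :=
  Set.prod_mono le_rfl (Set.subset_univ _)

theorem x1_le_x2_of_vert_inter_toSet_nonempty {B C : Box} :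
    (B.vert ∩ C.toSet).Nonempty → C.x1 ≤ B.x2 :=
  fun ⟨_, ⟨⟨_, h⟩, _⟩, ⟨h', _⟩, _⟩ => h'.trans h

theorem y1_le_y2_of_horiz_inter_toSet_nonempty {B C : Box} :
    (B.horiz ∩ C.toSet).Nonempty → C.y1 ≤ B.y2 :=
  fun ⟨_, ⟨_, _, h⟩, _, h', _⟩ => h'.trans h

end Box

theorem fin_two_eq_zero_or_eq_one (i : Fin 2) : i = 0 ∨ i = 1 := by omega

theorem exists_injective_nat_lt_imp_lt {V α : Type*} [Fintype V] [LinearOrder α] {key : V → α}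
    (hkey : Injective key) :
    ∃ f : V → ℕ, Injective f ∧ ∀ u v, f u < f v → key u < key v := by
  classical
  let below (v : V) : Finset V := {u | key u < key v}
  have mem_below {u v : V} : u ∈ below v ↔ key u < key v := by simp [below]
  have hmono {u v : V} (h : key u ≤ key v) : #(below u) ≤ #(below v) :=
    card_le_card fun w hw => mem_below.2 ((mem_below.1 hw).trans_le h)
  have hstrict {u v : V} (h : key u < key v) : #(below u) < #(below v) :=
    card_lt_card ⟨fun w hw => mem_below.2 ((mem_below.1 hw).trans h),
      fun hsub => (mem_below.1 (hsub (mem_below.2 h))).false⟩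
  refine ⟨fun v => #(below v), fun u v h => hkey ?_,
    fun u v h => lt_of_not_ge fun h' => (hmono h').not_gt h⟩
  by_contra hne
  rcases lt_or_gt_of_ne hne with h' | h'
  exacts [(hstrict h').ne h, (hstrict h').ne' h]

section Diagonals

variable {V : Type*} {box : V → Box} {d1 d2 : ℝ}

theorem TwoDiagonal.d1_ne_d2 (hD : TwoDiagonal box d1 d2) : d1 ≠ d2 :=
  (hD.1.trans hD.2.1).ne

theorem TwoDiagonal.lower_or_upper (hD : TwoDiagonal box d1 d2) (v : V) :
    (box v).y2 = (box v).x2 + d1 ∨ (box v).y2 = (box v).x2 + d2 :=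
  (hD.2.2.2 v).imp And.left And.left

theorem TwoDiagonal.x2_nonpos_and_y2_nonneg (hD : TwoDiagonal box d1 d2) {v : V}
    (hv : (box v).y2 = (box v).x2 + d2) : (box v).x2 ≤ 0 ∧ 0 ≤ (box v).y2 := by
  rcases hD.2.2.2 v with ⟨hv', -⟩ | ⟨-, h⟩
  · exact absurd (by linarith) hD.d1_ne_d2
  · exact h

theorem TwoDiagonal.x2_nonneg_and_y2_nonpos (hD : TwoDiagonal box d1 d2) {v : V}
    (hv : (box v).y2 = (box v).x2 + d1) : 0 ≤ (box v).x2 ∧ (box v).y2 ≤ 0 := by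
  rcases hD.2.2.2 v with ⟨-, h⟩ | ⟨hv', -⟩
  · exact h
  · exact absurd (by linarith) hD.d1_ne_d2

theorem TwoDiagonal.eq_of_x2_eq {u v : V} (hD : TwoDiagonal box d1 d2) {d : ℝ}
    (hu : (box u).y2 = (box u).x2 + d) (hv : (box v).y2 = (box v).x2 + d)
    (h : (box u).x2 = (box v).x2) : u = v := by
  by_contra huv
  exact hD.2.2.1 u v huv (Prod.ext h (by rw [hu, hv, h]))

theorem Blocking.x1_le_x2_or_y1_le_y2 (hB : Blocking box d1 d2) {w v : V}
    (hw : (box w).y2 = (box w).x2 + d2) (hv : (box v).y2 = (box v).x2 + d1) :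
    (box v).x1 ≤ (box w).x2 ∨ (box w).y1 ≤ (box v).y2 := by
  by_cases h : ((box w).toSet ∩ (box v).toSet).Nonempty
  · exact .inl (Box.x1_le_x2_of_vert_inter_toSet_nonempty
      (h.mono (Set.inter_subset_inter_left _ (box w).toSet_subset_vert)))
  · exact (hB w v hw hv h).imp Box.x1_le_x2_of_vert_inter_toSet_nonempty
      Box.y1_le_y2_of_horiz_inter_toSet_nonempty

end Diagonals

section Forward

variable {V : Type*} [Fintype V] (G : SimpleGraph V) (f : V → ℕ)

open Classical in
noncomputable def minNeighborLabel {ι : Type*} (c : V → ι) (k : ι) (v : V) : ℕ :=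
  (insert v ({u | c u = k ∧ G.Adj v u} : Finset V)).inf' (insert_nonempty _ _) f

theorem minNeighborLabel_le_self {ι : Type*} (c : V → ι) (k : ι) (v : V) :
    minNeighborLabel G f c k v ≤ f v := by
  classical
  exact inf'_le f (mem_insert_self v _)

theorem minNeighborLabel_le_iff_adj {ι : Type*} {c : V → ι} (hinj : Injective f)
    (hcons : ConsistentWith G f c) {u v : V} (huv : f u < f v) :
    minNeighborLabel G f c (c u) v ≤ f u ↔ G.Adj v u := by
  classical
  unfold minNeighborLabel
  constructor
  · intro h
    obtain ⟨w, hw, hfw⟩ := exists_mem_eq_inf' (insert_nonempty _ _) f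
    rw [hfw] at h
    obtain rfl | hw := mem_insert.1 hw
    · omega
    obtain ⟨hcw, hvw⟩ := (mem_filter.1 hw).2
    obtain h | h := h.lt_or_eq
    · exact hcons w u v h huv hcw hvw
    · rwa [← hinj h]
  · intro h
    exact inf'_le f (mem_insert_of_mem (by simp [h]))

variable (c : V → Fin 2) (K : ℝ)

noncomputable def thinBox (v : V) : Box where
  x1 := minNeighborLabel G f c 1 v - K
  x2 := if c v = 0 then f v else f v - K
  y1 := minNeighborLabel G f c 0 v - K
  y2 := if c v = 0 then f v - K else f v

variable {c} in
theorem thinBox_corner_of_eq_zero {v : V} (hv : c v = 0) :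
    (thinBox G f c K v).x2 = f v ∧ (thinBox G f c K v).y2 = f v - K := by
  simp [thinBox, hv]

variable {c} in
theorem thinBox_corner_of_eq_one {v : V} (hv : c v = 1) :
    (thinBox G f c K v).x2 = f v - K ∧ (thinBox G f c K v).y2 = f v := by
  simp [thinBox, hv]

variable {K} in
theorem thinBox_bounds (hK : 0 ≤ K) (v : V) :
    (thinBox G f c K v).x1 ≤ f v - K ∧ (thinBox G f c K v).y1 ≤ f v - K ∧
      f v - K ≤ (thinBox G f c K v).x2 ∧ (thinBox G f c K v).x2 ≤ f v ∧
      f v - K ≤ (thinBox G f c K v).y2 ∧ (thinBox G f c K v).y2 ≤ f v := by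
  have h0 : (minNeighborLabel G f c 0 v : ℝ) ≤ f v := by
    exact_mod_cast minNeighborLabel_le_self G f c 0 v
  have h1 : (minNeighborLabel G f c 1 v : ℝ) ≤ f v := by
    exact_mod_cast minNeighborLabel_le_self G f c 1 v
  refine ⟨by simp only [thinBox]; linarith, by simp only [thinBox]; linarith, ?_⟩
  rcases fin_two_eq_zero_or_eq_one (c v) with hv | hv
  · obtain ⟨hx, hy⟩ := thinBox_corner_of_eq_zero G f K hv
    rw [hx, hy]; refine ⟨?_, ?_, ?_, ?_⟩ <;> linarith
  · obtain ⟨hx, hy⟩ := thinBox_corner_of_eq_one G f K hv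
    rw [hx, hy]; refine ⟨?_, ?_, ?_, ?_⟩ <;> linarith

variable {K} in
theorem thinBox_nondegenerate (hK : 0 ≤ K) (v : V) :
    (thinBox G f c K v).x1 ≤ (thinBox G f c K v).x2 ∧
      (thinBox G f c K v).y1 ≤ (thinBox G f c K v).y2 := by
  obtain ⟨hx1, hy1, hx2, -, hy2, -⟩ := thinBox_bounds G f c hK v
  exact ⟨hx1.trans hx2, hy1.trans hy2⟩

variable {G f c K}

theorem adj_iff_thinBox_inter_nonempty (hinj : Injective f) (hcons : ConsistentWith G f c)
    (hK : ∀ w, (f w : ℝ) < K) {u v : V} (huv : f u < f v) :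
    G.Adj v u ↔ ((thinBox G f c K v).toSet ∩ (thinBox G f c K u).toSet).Nonempty := by
  have hK0 : 0 ≤ K := (Nat.cast_nonneg _).trans (hK u).le
  rw [Box.toSet_inter_toSet_nonempty_iff_of_le (thinBox_nondegenerate G f c hK0 v)
    (thinBox_nondegenerate G f c hK0 u), ← minNeighborLabel_le_iff_adj G f hinj hcons huv]
  have hfuv : (f u : ℝ) < f v := by exact_mod_cast huv
  have hfu : (0 : ℝ) ≤ f u := Nat.cast_nonneg _
  have hKv := hK v
  obtain ⟨hx1u, hy1u, hx2u, -, hy2u, -⟩ := thinBox_bounds G f c hK0 u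
  obtain ⟨-, -, hx2v, -, hy2v, -⟩ := thinBox_bounds G f c hK0 v
  have h0 : (minNeighborLabel G f c 0 v : ℝ) ≤ f v := by
    exact_mod_cast minNeighborLabel_le_self G f c 0 v
  have h1 : (minNeighborLabel G f c 1 v : ℝ) ≤ f v := by
    exact_mod_cast minNeighborLabel_le_self G f c 1 v
  have hx1v : (thinBox G f c K v).x1 = minNeighborLabel G f c 1 v - K := rfl
  have hy1v : (thinBox G f c K v).y1 = minNeighborLabel G f c 0 v - K := rfl
  rcases fin_two_eq_zero_or_eq_one (c u) with hc | hc <;> rw [hc]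
  · obtain ⟨hx, hy⟩ := thinBox_corner_of_eq_zero G f K hc
    rw [hx, hy, ← Nat.cast_le (α := ℝ)]
    constructor
    · intro h; refine ⟨?_, ?_, ?_, ?_⟩ <;> linarith
    · intro h; linarith [h.2.2.2]
  · obtain ⟨hx, hy⟩ := thinBox_corner_of_eq_one G f K hc
    rw [hx, hy, ← Nat.cast_le (α := ℝ)]
    constructor
    · intro h; refine ⟨?_, ?_, ?_, ?_⟩ <;> linarith
    · intro h; linarith [h.2.1]

theorem twoDiagonal_thinBox (hinj : Injective f) (hK0 : 0 < K) (hK : ∀ w, (f w : ℝ) < K) :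
    TwoDiagonal (thinBox G f c K) (-K) K := by
  refine ⟨neg_neg_of_pos hK0, hK0, fun u v huv hcorner => ?_, fun v => ?_⟩
  · obtain ⟨hx, hy⟩ := Prod.mk.inj hcorner
    rcases fin_two_eq_zero_or_eq_one (c u) with hu | hu <;>
      rcases fin_two_eq_zero_or_eq_one (c v) with hv | hv <;>
      simp [thinBox, hu, hv] at hx hy <;> first | exact hinj.ne huv hx | linarith
  · have hfv : (0 : ℝ) ≤ f v := Nat.cast_nonneg _
    have hKv := hK v
    rcases fin_two_eq_zero_or_eq_one (c v) with hv | hv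
    · obtain ⟨hx, hy⟩ := thinBox_corner_of_eq_zero G f K hv
      exact .inl ⟨by rw [hx, hy]; ring, by rw [hx]; exact hfv, by rw [hy]; linarith⟩
    · obtain ⟨hx, hy⟩ := thinBox_corner_of_eq_one G f K hv
      exact .inr ⟨by rw [hx, hy]; ring, by rw [hx]; linarith, by rw [hy]; exact hfv⟩

theorem blocking_thinBox (hK0 : 0 < K) (hK : ∀ w, (f w : ℝ) < K) :
    Blocking (thinBox G f c K) (-K) K := by
  intro u v hu hv _
  have hcu : c u = 1 := (fin_two_eq_zero_or_eq_one (c u)).resolve_left fun hc => by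
    obtain ⟨hx, hy⟩ := thinBox_corner_of_eq_zero G f K hc
    linarith
  have hcv : c v = 0 := (fin_two_eq_zero_or_eq_one (c v)).resolve_right fun hc => by
    obtain ⟨hx, hy⟩ := thinBox_corner_of_eq_one G f K hc
    linarith
  obtain ⟨hxu, hyu⟩ := thinBox_corner_of_eq_one G f K hcu
  obtain ⟨hxv, hyv⟩ := thinBox_corner_of_eq_zero G f K hcv
  obtain ⟨hx1u, hy1u, -⟩ := thinBox_bounds G f c hK0.le u
  obtain ⟨hx1v, hy1v, -⟩ := thinBox_bounds G f c hK0.le v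
  have hfu : (0 : ℝ) ≤ f u := Nat.cast_nonneg _
  have hfv : (0 : ℝ) ≤ f v := Nat.cast_nonneg _
  have hKu := hK u
  have hKv := hK v
  rw [Box.vert_inter_toSet_nonempty_iff, Box.horiz_inter_toSet_nonempty_iff, hxu, hyu, hxv, hyv]
  simp only [max_le_iff, le_min_iff]
  rcases le_or_gt (f u : ℝ) (f v) with h | h
  · right; refine ⟨⟨⟨?_, ?_⟩, ?_, ?_⟩, ?_⟩ <;> linarith
  · left; refine ⟨⟨⟨?_, ?_⟩, ?_, ?_⟩, ?_⟩ <;> linarith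

theorem isBoxModel_thinBox (hinj : Injective f) (hcons : ConsistentWith G f c)
    (hK : ∀ w, (f w : ℝ) < K) (hK0 : 0 ≤ K) : IsBoxModel G (thinBox G f c K) := by
  refine ⟨thinBox_nondegenerate G f c hK0, fun u v huv => ?_⟩
  rcases (hinj.ne huv).lt_or_gt with h | h
  · rw [G.adj_comm, Set.inter_comm]
    exact adj_iff_thinBox_inter_nonempty hinj hcons hK h
  · exact adj_iff_thinBox_inter_nonempty hinj hcons hK h

end Forward

theorem TwoThin.exists_blocking_twoDiagonal_model {V : Type*} [Fintype V] {G : SimpleGraph V}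
    (hG : TwoThin G) : ∃ (box : V → Box) (d1 d2 : ℝ),
      TwoDiagonal box d1 d2 ∧ Blocking box d1 d2 ∧ IsBoxModel G box := by
  obtain ⟨f, hinj, c, hcons⟩ := hG
  set K : ℝ := (univ.sup f : ℕ) + 1
  have hK0 : 0 < K := by positivity
  have hK : ∀ w, (f w : ℝ) < K := fun w => by
    have : f w ≤ univ.sup f := le_sup (mem_univ w)
    simp only [K]; exact_mod_cast Nat.lt_succ_of_le this
  exact ⟨thinBox G f c K, -K, K, twoDiagonal_thinBox hinj hK0 hK, blocking_thinBox hK0 hK,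
    isBoxModel_thinBox hinj hcons hK hK0.le⟩

section Converse

variable {V : Type*} [Fintype V] {box : V → Box} {d1 d2 : ℝ}

variable (box d1 d2) in
open Classical in
noncomputable def upperReach (w : V) : ℝ :=
  (insert w ({w' | (box w').y2 = (box w').x2 + d2 ∧ (box w').x2 ≤ (box w).x2} : Finset V)).sup'
    (insert_nonempty _ _) fun w' => (box w').y1

theorem y1_le_upperReach (w : V) : (box w).y1 ≤ upperReach box d2 w := by
  classical
  exact le_sup' (fun w' => (box w').y1) (mem_insert_self w _)

theorem upperReach_mono {v w : V} (hv : (box v).y2 = (box v).x2 + d2)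
    (hvw : (box v).x2 ≤ (box w).x2) : upperReach box d2 v ≤ upperReach box d2 w := by
  classical
  refine sup'_mono _ (fun x hx => mem_insert_of_mem ?_) _
  simp only [mem_insert, mem_filter, mem_univ, true_and] at hx ⊢
  rcases hx with rfl | ⟨hx, hxv⟩
  exacts [⟨hv, hvw⟩, ⟨hx, hxv.trans hvw⟩]

theorem exists_lt_y1_of_lt_upperReach {w : V} (hw : (box w).y2 = (box w).x2 + d2) {t : ℝ}
    (ht : t < upperReach box d2 w) :
    ∃ w', (box w').y2 = (box w').x2 + d2 ∧ (box w').x2 ≤ (box w).x2 ∧ t < (box w').y1 := by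
  classical
  obtain ⟨w', hw', ht'⟩ := (lt_sup'_iff _).1 ht
  simp only [mem_insert, mem_filter, mem_univ, true_and] at hw'
  rcases hw' with rfl | hw'
  exacts [⟨w', hw, le_rfl, ht'⟩, ⟨w', hw'.1, hw'.2, ht'⟩]

variable (box d1 d2) in
/-- The second coordinate `1` exceeds the `x2 ≤ 0` of every upper corner, so on a tie the upper
box comes first. -/
noncomputable def orderKey (v : V) : ℝ ×ₗ ℝ :=
  if (box v).y2 = (box v).x2 + d1 then toLex ((box v).y2, 1)
  else toLex (upperReach box d2 v, (box v).x2)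

theorem orderKey_of_lower {v : V} (hv : (box v).y2 = (box v).x2 + d1) :
    orderKey box d1 d2 v = toLex ((box v).y2, 1) :=
  if_pos hv

theorem orderKey_of_upper (hd : d1 ≠ d2) {v : V} (hv : (box v).y2 = (box v).x2 + d2) :
    orderKey box d1 d2 v = toLex (upperReach box d2 v, (box v).x2) :=
  if_neg fun hv' => hd (by linarith)

theorem y2_lt_y2_of_orderKey_lt {u v : V} (hu : (box u).y2 = (box u).x2 + d1)
    (hv : (box v).y2 = (box v).x2 + d1) (h : orderKey box d1 d2 u < orderKey box d1 d2 v) :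
    (box u).y2 < (box v).y2 := by
  rw [orderKey_of_lower hu, orderKey_of_lower hv, Prod.Lex.toLex_lt_toLex] at h
  exact h.resolve_right fun h => h.2.false

theorem x2_lt_x2_of_orderKey_lt (hd : d1 ≠ d2) {u v : V} (hu : (box u).y2 = (box u).x2 + d2)
    (hv : (box v).y2 = (box v).x2 + d2) (h : orderKey box d1 d2 u < orderKey box d1 d2 v) :
    (box u).x2 < (box v).x2 := by
  rw [orderKey_of_upper hd hu, orderKey_of_upper hd hv, Prod.Lex.toLex_lt_toLex] at h
  rcases h with h | ⟨-, h⟩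
  · exact lt_of_not_ge fun hvu => (upperReach_mono hv hvu).not_gt h
  · exact h

theorem x1_le_x2_of_orderKey_lt (hD : TwoDiagonal box d1 d2) (hB : Blocking box d1 d2)
    {v w : V} (hv : (box v).y2 = (box v).x2 + d1) (hw : (box w).y2 = (box w).x2 + d2)
    (h : orderKey box d1 d2 v < orderKey box d1 d2 w) : (box v).x1 ≤ (box w).x2 := by
  rw [orderKey_of_lower hv, orderKey_of_upper hD.d1_ne_d2 hw, Prod.Lex.toLex_lt_toLex] at h
  rcases h with h | ⟨-, h⟩
  · obtain ⟨w', hw', hw'w, hvw'⟩ := exists_lt_y1_of_lt_upperReach hw h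
    exact ((hB.x1_le_x2_or_y1_le_y2 hw' hv).resolve_right hvw'.not_ge).trans hw'w
  · linarith [(hD.x2_nonpos_and_y2_nonneg hw).1]

theorem y1_le_y2_of_orderKey_lt (hd : d1 ≠ d2) {v w : V} (hv : (box v).y2 = (box v).x2 + d2)
    (hw : (box w).y2 = (box w).x2 + d1) (h : orderKey box d1 d2 v < orderKey box d1 d2 w) :
    (box v).y1 ≤ (box w).y2 := by
  rw [orderKey_of_upper hd hv, orderKey_of_lower hw, Prod.Lex.toLex_lt_toLex] at h
  exact (y1_le_upperReach v).trans (h.elim le_of_lt fun h => h.1.le)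

theorem orderKey_injective (hD : TwoDiagonal box d1 d2) : Injective (orderKey box d1 d2) := by
  intro u v h
  rcases hD.lower_or_upper u with hu | hu <;> rcases hD.lower_or_upper v with hv | hv
  · rw [orderKey_of_lower hu, orderKey_of_lower hv] at h
    exact hD.eq_of_x2_eq hu hv (by linarith [congrArg (·.1) (toLex.injective h)])
  · rw [orderKey_of_lower hu, orderKey_of_upper hD.d1_ne_d2 hv] at h
    linarith [congrArg (·.2) (toLex.injective h), (hD.x2_nonpos_and_y2_nonneg hv).1]
  · rw [orderKey_of_upper hD.d1_ne_d2 hu, orderKey_of_lower hv] at h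
    linarith [congrArg (·.2) (toLex.injective h), (hD.x2_nonpos_and_y2_nonneg hu).1]
  · rw [orderKey_of_upper hD.d1_ne_d2 hu, orderKey_of_upper hD.d1_ne_d2 hv] at h
    exact hD.eq_of_x2_eq hu hv (congrArg (·.2) (toLex.injective h))

theorem adj_of_orderKey_lt (hD : TwoDiagonal box d1 d2) (hB : Blocking box d1 d2)
    {G : SimpleGraph V} (hM : IsBoxModel G box) {u v w : V}
    (huv : orderKey box d1 d2 u < orderKey box d1 d2 v)
    (hvw : orderKey box d1 d2 v < orderKey box d1 d2 w)
    (hclass : (box u).y2 = (box u).x2 + d1 ↔ (box v).y2 = (box v).x2 + d1)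
    (hwu : G.Adj w u) : G.Adj w v := by
  have hd := hD.d1_ne_d2
  rw [hM.2 w u (ne_of_apply_ne _ (huv.trans hvw).ne'),
    Box.toSet_inter_toSet_nonempty_iff_of_le (hM.1 w) (hM.1 u)] at hwu
  rw [hM.2 w v (ne_of_apply_ne _ hvw.ne'),
    Box.toSet_inter_toSet_nonempty_iff_of_le (hM.1 w) (hM.1 v)]
  obtain ⟨-, hwu1, -, hwu2⟩ := hwu
  obtain ⟨hv1, hv2⟩ := hM.1 v
  rcases hD.lower_or_upper u with hu | hu
  · have hv := hclass.1 hu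
    have huv' := y2_lt_y2_of_orderKey_lt hu hv huv
    rcases hD.lower_or_upper w with hw | hw
    · have hvw' := y2_lt_y2_of_orderKey_lt hv hw hvw
      refine ⟨?_, ?_, ?_, ?_⟩ <;> linarith
    · have hvw' := x1_le_x2_of_orderKey_lt hD hB hv hw hvw
      have hv0 := (hD.x2_nonneg_and_y2_nonpos hv).2
      have hw0 := (hD.x2_nonpos_and_y2_nonneg hw).2
      refine ⟨?_, ?_, ?_, ?_⟩ <;> linarith
  · have hv := (hD.lower_or_upper v).resolve_left fun hv => hd (by linarith [hclass.2 hv])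
    have huv' := x2_lt_x2_of_orderKey_lt hd hu hv huv
    rcases hD.lower_or_upper w with hw | hw
    · have hvw' := y1_le_y2_of_orderKey_lt hd hv hw hvw
      have hv0 := (hD.x2_nonpos_and_y2_nonneg hv).1
      have hw0 := (hD.x2_nonneg_and_y2_nonpos hw).1
      refine ⟨?_, ?_, ?_, ?_⟩ <;> linarith
    · have hvw' := x2_lt_x2_of_orderKey_lt hd hv hw hvw
      refine ⟨?_, ?_, ?_, ?_⟩ <;> linarith

end Converse

theorem TwoThin.of_blocking_twoDiagonal_model {V : Type*} [Fintype V] {G : SimpleGraph V}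
    {box : V → Box} {d1 d2 : ℝ} (hD : TwoDiagonal box d1 d2) (hB : Blocking box d1 d2)
    (hM : IsBoxModel G box) : TwoThin G := by
  obtain ⟨f, hinj, hf⟩ := exists_injective_nat_lt_imp_lt (orderKey_injective hD)
  refine ⟨f, hinj, fun v => if (box v).y2 = (box v).x2 + d1 then 0 else 1,
    fun u v w huv hvw hc => adj_of_orderKey_lt hD hB hM (hf _ _ huv) (hf _ _ hvw) ?_⟩
  dsimp only at hc
  split_ifs at hc <;> simp_all

/-- A graph is 2-thin if and only if it has a blocking 2-diagonal intersection model of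
axis-parallel rectangles in the plane. -/
theorem twoThin_iff_blocking_twoDiagonal_model {V : Type*} [Fintype V]
    (G : SimpleGraph V) :
    TwoThin G ↔ ∃ (box : V → Box) (d1 d2 : ℝ),
      TwoDiagonal box d1 d2 ∧ Blocking box d1 d2 ∧ IsBoxModel G box :=
  ⟨TwoThin.exists_blocking_twoDiagonal_model,
    fun ⟨_, _, _, hD, hB, hM⟩ => TwoThin.of_blocking_twoDiagonal_model hD hB hM⟩
end

section
/- A graph G is proper 2-thin if and only if it has a bi-semi-proper weakly 2-diagonal box intersection model; equivalently, if and only if it has a bi-semi-proper blocking 2-diagonal model. -/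
/-- A graph is proper 2-thin if it admits a vertex ordering and a 2-class partition such
that both the ordering and its reverse are consistent with the partition. -/
def ProperTwoThin {V : Type*} (G : SimpleGraph V) : Prop :=
  ∃ f : V → ℕ, Function.Injective f ∧
    ∃ c : V → Fin 2, ConsistentWith G f c ∧ RevConsistentWith G f c

/-- Weakly 2-diagonal: upper-right corners pairwise distinct, each on one of two fixed
diagonals `y = x + d1`, `y = x + d2` with `d1 < d2`. -/
def WeaklyTwoDiagonal {V : Type*} (box : V → Box) (d1 d2 : ℝ) : Prop :=
  d1 < d2 ∧
  (∀ u v : V, u ≠ v → ((box u).x2, (box u).y2) ≠ ((box v).x2, (box v).y2)) ∧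
  ∀ v : V, (box v).y2 = (box v).x2 + d1 ∨ (box v).y2 = (box v).x2 + d2

/-- Bi-semi-proper property. -/
def BiSemiProper {V : Type*} (box : V → Box) : Prop :=
  ∀ u v : V, (box u).y2 - (box u).x2 = (box v).y2 - (box v).x2 →
    (box u).x2 < (box v).x2 → (box u).x1 ≤ (box v).x1 ∧ (box u).y1 ≤ (box v).y1

/-!
For a proper 2-thin ordering `f` with classes `c`, let `ℓ v` and `m v` be the first positions of a
neighbour of `v` in its own and in the other class. Consistency of the ordering says that `u v` is
an edge iff `ℓ v ≤ f u` (same class, `f u < f v`) resp. `m u ≤ f v ∧ m v ≤ f u` (different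
classes); consistency of the reverse ordering makes `ℓ` and `m` monotone along each class. Boxes
with upper-right corners `(f v, f v - M)` and `(f v - M, f v)`, for `M` beyond all positions, and
lower-left corners built from `ℓ v` and `m v` then give a blocking bi-semi-proper 2-diagonal
model.

Conversely, two boxes meet iff each one's lower-left corner lies weakly below and to the left of
the other's upper-right corner. In a bi-semi-proper weakly 2-diagonal model this makes each
diagonal a chain, ordered by `x2`, along which neighbourhoods are intervals. The two chains are
merged by putting an upper vertex `h` before a lower vertex `l` exactly when some `l' ⪯ l`, not
adjacent to `h`, would be forced to be adjacent to `h` if it came first. This relation is monotone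
in both arguments, so the merge is a linear order, and the corner geometry shows that the
configurations forcing `h` before `l` and `l` before `h` never occur together.
-/

theorem Set.Icc_inter_Icc_nonempty_iff {α : Type*} [LinearOrder α] {a b c d : α}
    (hab : a ≤ b) (hcd : c ≤ d) : (Set.Icc a b ∩ Set.Icc c d).Nonempty ↔ a ≤ d ∧ c ≤ b := by
  rw [Set.Icc_inter_Icc, Set.nonempty_Icc, sup_le_iff, le_inf_iff, le_inf_iff]
  tauto

namespace Box

def Reaches (a b : Box) : Prop := a.x1 ≤ b.x2 ∧ a.y1 ≤ b.y2

theorem Reaches.mono {a a' b b' : Box} (h : a.Reaches b) (hx1 : a'.x1 ≤ a.x1)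
    (hy1 : a'.y1 ≤ a.y1) (hx2 : b.x2 ≤ b'.x2) (hy2 : b.y2 ≤ b'.y2) : a'.Reaches b' :=
  ⟨by linarith [h.1], by linarith [h.2]⟩

theorem toSet_inter_nonempty_iff {a b : Box} (ha : a.x1 ≤ a.x2 ∧ a.y1 ≤ a.y2)
    (hb : b.x1 ≤ b.x2 ∧ b.y1 ≤ b.y2) :
    (a.toSet ∩ b.toSet).Nonempty ↔ a.Reaches b ∧ b.Reaches a := by
  rw [toSet, toSet, Set.prod_inter_prod, Set.prod_nonempty_iff,
    Set.Icc_inter_Icc_nonempty_iff ha.1 hb.1, Set.Icc_inter_Icc_nonempty_iff ha.2 hb.2, Reaches,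
    Reaches]
  tauto

theorem vert_inter_toSet_nonempty_iff_s15 {a b : Box} (ha : a.x1 ≤ a.x2)
    (hb : b.x1 ≤ b.x2 ∧ b.y1 ≤ b.y2) :
    (a.vert ∩ b.toSet).Nonempty ↔ a.x1 ≤ b.x2 ∧ b.x1 ≤ a.x2 := by
  rw [vert, toSet, Set.prod_inter_prod, Set.prod_nonempty_iff, Set.univ_inter,
    Set.Icc_inter_Icc_nonempty_iff ha hb.1, Set.nonempty_Icc]
  tauto

theorem horiz_inter_toSet_nonempty_iff_s15 {a b : Box} (ha : a.y1 ≤ a.y2)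
    (hb : b.x1 ≤ b.x2 ∧ b.y1 ≤ b.y2) :
    (a.horiz ∩ b.toSet).Nonempty ↔ a.y1 ≤ b.y2 ∧ b.y1 ≤ a.y2 := by
  rw [horiz, toSet, Set.prod_inter_prod, Set.prod_nonempty_iff, Set.univ_inter,
    Set.Icc_inter_Icc_nonempty_iff ha hb.2, Set.nonempty_Icc]
  tauto

end Box

theorem exists_injective_nat_lt_iff {α : Type*} [Fintype α] (r : α → α → Prop)
    [IsStrictTotalOrder α r] : ∃ f : α → ℕ, Function.Injective f ∧ ∀ a b, f a < f b ↔ r a b := by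
  classical
  let f a := (Finset.univ.filter (r · a)).card
  have hlt : ∀ a b, r a b → f a < f b := fun a b hab => by
    refine Finset.card_lt_card ((Finset.ssubset_iff_of_subset fun x hx => ?_).mpr ⟨a, ?_, ?_⟩)
    · simp only [Finset.mem_filter, Finset.mem_univ, true_and] at hx ⊢
      exact _root_.trans hx hab
    · simpa using hab
    · simpa using irrefl a
  refine ⟨f, fun a b hab => ?_, fun a b => ⟨fun h => ?_, hlt a b⟩⟩
  · exact Std.Trichotomous.trichotomous (r := r) a b (fun h => (hlt a b h).ne hab)
      (fun h => (hlt b a h).ne' hab)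
  · rcases trichotomous_of r a b with hab | rfl | hba
    · exact hab
    · exact absurd h (lt_irrefl _)
    · exact absurd h (hlt b a hba).not_gt

section ChainMerge

variable {V β : Type*} [LinearOrder β] (p : V → Prop) (key : V → β) (R : V → V → Prop)

def mergeRel (u v : V) : Prop :=
  ((p u ↔ p v) ∧ key u < key v) ∨ (p u ∧ ¬p v ∧ ¬R v u) ∨ (¬p u ∧ p v ∧ R u v)

variable {p key R}

theorem isStrictTotalOrder_mergeRel (hkey : ∀ u v, (p u ↔ p v) → key u = key v → u = v)
    (hright : ∀ h l l', ¬p h → p l → R h l → p l' → key l ≤ key l' → R h l')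
    (hleft : ∀ h h' l, ¬p h → p l → R h l → ¬p h' → key h' ≤ key h → R h' l) :
    IsStrictTotalOrder V (mergeRel p key R) where
  irrefl u := by
    rintro (⟨-, h⟩ | ⟨h, h', -⟩ | ⟨h, h', -⟩)
    exacts [lt_irrefl _ h, h' h, h h']
  trichotomous u v huv hvu := by
    by_cases hpuv : p u ↔ p v
    · exact hkey u v hpuv (le_antisymm (not_lt.1 fun h => hvu (.inl ⟨hpuv.symm, h⟩))
        (not_lt.1 fun h => huv (.inl ⟨hpuv, h⟩)))
    · simp only [mergeRel] at huv hvu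
      tauto
  trans u v w huv hvw := by
    simp only [mergeRel] at *
    by_cases hu : p u <;> by_cases hv : p v <;> by_cases hw : p w <;>
      simp_all only [iff_true, iff_false, iff_self, true_and, false_and, and_false, and_self,
        not_true_eq_false, not_false_eq_true, or_false, false_or, or_self]
    · exact huv.trans hvw
    · exact fun hwu => hvw (hright w u v hw hu hwu hv huv.le)
    · exact lt_of_not_ge fun hwu => huv (hright v w u hv hw hvw hu hwu)
    · exact fun hwu => huv (hleft w v u hw hu hwu hv hvw.le)
    · exact hright u v w hu hv huv hw hvw.le
    · exact lt_of_not_ge fun hwu => hvw (hleft u w v hu hv huv hw hwu)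
    · exact hleft v u w hv hw hvw hu huv.le
    · exact huv.trans hvw

theorem mergeRel.key_lt {u v : V} (h : mergeRel p key R u v) (huv : p u ↔ p v) :
    key u < key v := by
  rcases h with ⟨-, h⟩ | ⟨hu, hv, -⟩ | ⟨hu, hv, -⟩
  exacts [h, absurd (huv.mp hu) hv, absurd (huv.mpr hv) hu]

end ChainMerge

theorem ite_eq_ite_iff {α : Type*} {p q : Prop} [Decidable p] [Decidable q] {a b : α}
    (hab : a ≠ b) : ((if p then a else b) = if q then a else b) ↔ (p ↔ q) := by
  by_cases hp : p <;> by_cases hq : q <;> simp [hp, hq, hab, hab.symm]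

theorem Fin.eq_zero_or_eq_one (a : Fin 2) : a = 0 ∨ a = 1 := by omega

section Backward

variable {V : Type*} {G : SimpleGraph V} {box : V → Box} {d1 d2 : ℝ}

def OnLowerDiag (box : V → Box) (d1 : ℝ) (v : V) : Prop := (box v).y2 = (box v).x2 + d1

def DiagLE (box : V → Box) (d1 : ℝ) (u v : V) : Prop :=
  (OnLowerDiag box d1 u ↔ OnLowerDiag box d1 v) ∧ (box u).x2 ≤ (box v).x2

def DiagLT (box : V → Box) (d1 : ℝ) (u v : V) : Prop :=
  (OnLowerDiag box d1 u ↔ OnLowerDiag box d1 v) ∧ (box u).x2 < (box v).x2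

theorem DiagLT.diagLE {u v : V} (h : DiagLT box d1 u v) : DiagLE box d1 u v := ⟨h.1, h.2.le⟩

theorem DiagLE.refl (v : V) : DiagLE box d1 v v := ⟨Iff.rfl, le_rfl⟩

theorem DiagLE.trans {u v w : V} (huv : DiagLE box d1 u v) (hvw : DiagLE box d1 v w) :
    DiagLE box d1 u w := ⟨huv.1.trans hvw.1, huv.2.trans hvw.2⟩

theorem DiagLT.trans {u v w : V} (huv : DiagLT box d1 u v) (hvw : DiagLT box d1 v w) :
    DiagLT box d1 u w := ⟨huv.1.trans hvw.1, huv.2.trans hvw.2⟩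

theorem DiagLE.not_iff_of_not_iff {u v w : V} (huv : DiagLE box d1 u v)
    (hvw : ¬(OnLowerDiag box d1 v ↔ OnLowerDiag box d1 w)) :
    ¬(OnLowerDiag box d1 u ↔ OnLowerDiag box d1 w) :=
  fun huw => hvw (huv.1.symm.trans huw)

theorem WeaklyTwoDiagonal.offset_eq (hW : WeaklyTwoDiagonal box d1 d2) {u v : V}
    (h : OnLowerDiag box d1 u ↔ OnLowerDiag box d1 v) :
    (box u).y2 - (box u).x2 = (box v).y2 - (box v).x2 := by
  unfold OnLowerDiag at h
  rcases hW.2.2 u with hu | hu <;> rcases hW.2.2 v with hv | hv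
  all_goals first
    | linarith
    | exact absurd (h.mp hu) (by linarith [hW.1])
    | exact absurd (h.mpr hv) (by linarith [hW.1])

theorem WeaklyTwoDiagonal.eq_of_x2_eq (hW : WeaklyTwoDiagonal box d1 d2) {u v : V}
    (h : OnLowerDiag box d1 u ↔ OnLowerDiag box d1 v) (hx : (box u).x2 = (box v).x2) :
    u = v := by
  by_contra huv
  have hy : (box u).y2 = (box v).y2 := by linarith [hW.offset_eq h]
  exact hW.2.1 u v huv (by rw [hx, hy])

theorem DiagLE.eq_or_diagLT (hW : WeaklyTwoDiagonal box d1 d2) {u v : V}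
    (h : DiagLE box d1 u v) : u = v ∨ DiagLT box d1 u v :=
  h.2.eq_or_lt.imp (hW.eq_of_x2_eq h.1) (fun hlt => ⟨h.1, hlt⟩)

theorem DiagLE.upperRight_le (hW : WeaklyTwoDiagonal box d1 d2) {u v : V}
    (h : DiagLE box d1 u v) : (box u).x2 ≤ (box v).x2 ∧ (box u).y2 ≤ (box v).y2 :=
  ⟨h.2, by linarith [hW.offset_eq h.1, h.2]⟩

theorem DiagLE.lowerLeft_le (hW : WeaklyTwoDiagonal box d1 d2) (hB : BiSemiProper box)
    {u v : V} (h : DiagLE box d1 u v) : (box u).x1 ≤ (box v).x1 ∧ (box u).y1 ≤ (box v).y1 := by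
  rcases h.eq_or_diagLT hW with rfl | hlt
  · exact ⟨le_rfl, le_rfl⟩
  · exact hB u v (hW.offset_eq hlt.1) hlt.2

theorem Box.Reaches.of_diagLE (hW : WeaklyTwoDiagonal box d1 d2) (hB : BiSemiProper box)
    {u u' v v' : V} (h : (box u).Reaches (box v)) (hu : DiagLE box d1 u' u)
    (hv : DiagLE box d1 v v') : (box u').Reaches (box v') :=
  h.mono (hu.lowerLeft_le hW hB).1 (hu.lowerLeft_le hW hB).2 (hv.upperRight_le hW).1
    (hv.upperRight_le hW).2

theorem IsBoxModel.reaches_of_diagLE (hW : WeaklyTwoDiagonal box d1 d2) (hM : IsBoxModel G box)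
    {u v : V} (h : DiagLE box d1 u v) : (box u).Reaches (box v) :=
  ⟨(hM.1 u).1.trans (h.upperRight_le hW).1, (hM.1 u).2.trans (h.upperRight_le hW).2⟩

theorem IsBoxModel.adj_iff_reaches (hM : IsBoxModel G box) {u v : V} (huv : u ≠ v) :
    G.Adj u v ↔ (box u).Reaches (box v) ∧ (box v).Reaches (box u) :=
  (hM.2 u v huv).trans (Box.toSet_inter_nonempty_iff (hM.1 u) (hM.1 v))

theorem IsBoxModel.reaches_of_adj (hM : IsBoxModel G box) {u v : V} (h : G.Adj u v) :
    (box u).Reaches (box v) ∧ (box v).Reaches (box u) :=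
  (hM.adj_iff_reaches h.ne).mp h

theorem DiagLT.ne {u v : V} (h : DiagLT box d1 u v) : u ≠ v := by
  rintro rfl; exact lt_irrefl _ h.2

theorem IsBoxModel.adj_of_diagLT (hW : WeaklyTwoDiagonal box d1 d2) (hB : BiSemiProper box)
    (hM : IsBoxModel G box) {u v w : V} (huv : DiagLT box d1 u v) (hvw : DiagLT box d1 v w)
    (huw : G.Adj u w) : G.Adj u v ∧ G.Adj v w := by
  have hwu := (hM.reaches_of_adj huw).2
  exact ⟨(hM.adj_iff_reaches huv.ne).mpr ⟨hM.reaches_of_diagLE hW huv.diagLE,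
      hwu.of_diagLE hW hB hvw.diagLE (.refl u)⟩,
    (hM.adj_iff_reaches hvw.ne).mpr ⟨hM.reaches_of_diagLE hW hvw.diagLE,
      hwu.of_diagLE hW hB (.refl w) huv.diagLE⟩⟩

/-- The configurations in which `u` cannot precede `v` in a proper ordering without being
adjacent to `v`. -/
def ForcesAdj (G : SimpleGraph V) (box : V → Box) (d1 : ℝ) (u v : V) : Prop :=
  (∃ u', DiagLT box d1 u' u ∧ G.Adj u' v) ∨ (∃ v', DiagLT box d1 v v' ∧ G.Adj u v')

theorem ForcesAdj.reaches (hW : WeaklyTwoDiagonal box d1 d2) (hB : BiSemiProper box)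
    (hM : IsBoxModel G box) {u v : V} (h : ForcesAdj G box d1 u v) : (box v).Reaches (box u) := by
  rcases h with ⟨u', hu', hadj⟩ | ⟨v', hv', hadj⟩
  · exact (hM.reaches_of_adj hadj).2.of_diagLE hW hB (.refl v) hu'.diagLE
  · exact (hM.reaches_of_adj hadj).2.of_diagLE hW hB hv'.diagLE (.refl u)

/-- If `l` preceded `h`, so would `l'`, which would then have to be adjacent to `h`. -/
def MustPrecede (G : SimpleGraph V) (box : V → Box) (d1 : ℝ) (h l : V) : Prop :=
  ∃ l', DiagLE box d1 l' l ∧ ¬G.Adj l' h ∧ ForcesAdj G box d1 l' h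

theorem MustPrecede.of_diagLE {h l l' : V} (hhl : MustPrecede G box d1 h l)
    (hl : DiagLE box d1 l l') : MustPrecede G box d1 h l' :=
  let ⟨l₀, hl₀, hadj, hforces⟩ := hhl
  ⟨l₀, hl₀.trans hl, hadj, hforces⟩

theorem MustPrecede.not_forcesAdj (hW : WeaklyTwoDiagonal box d1 d2) (hB : BiSemiProper box)
    (hM : IsBoxModel G box) {h l : V} (hhl : ¬(OnLowerDiag box d1 h ↔ OnLowerDiag box d1 l))
    (hmust : MustPrecede G box d1 h l) : ¬ForcesAdj G box d1 h l := fun hforces => by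
  obtain ⟨l', hl', hnadj, hforces'⟩ := hmust
  have hne : l' ≠ h := fun he => hl'.not_iff_of_not_iff (fun e => hhl e.symm) (he ▸ Iff.rfl)
  exact hnadj ((hM.adj_iff_reaches hne).mpr
    ⟨(hforces.reaches hW hB hM).of_diagLE hW hB hl' (.refl h), hforces'.reaches hW hB hM⟩)

theorem MustPrecede.of_diagLT (hW : WeaklyTwoDiagonal box d1 d2) (hB : BiSemiProper box)
    (hM : IsBoxModel G box) {h h' l : V} (hhl : ¬(OnLowerDiag box d1 h ↔ OnLowerDiag box d1 l))
    (hmust : MustPrecede G box d1 h l) (hh : DiagLT box d1 h' h) : MustPrecede G box d1 h' l := by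
  obtain ⟨l', hl', hnadj, hforces⟩ := hmust
  have hl'h : ¬(OnLowerDiag box d1 l' ↔ OnLowerDiag box d1 h) :=
    hl'.not_iff_of_not_iff (fun e => hhl e.symm)
  have hne : l' ≠ h := fun he => hl'h (he ▸ Iff.rfl)
  have hnadj' : ¬G.Adj l' h' := fun hadj => hnadj <| (hM.adj_iff_reaches hne).mpr
    ⟨(hM.reaches_of_adj hadj).1.of_diagLE hW hB (.refl l') hh.diagLE, hforces.reaches hW hB hM⟩
  rcases hforces with ⟨l'', hl'', hadj''⟩ | ⟨h'', hh'', hadj''⟩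
  · by_cases hadj : G.Adj l'' h'
    · exact ⟨l', hl', hnadj', .inl ⟨l'', hl'', hadj⟩⟩
    · exact ⟨l'', hl''.diagLE.trans hl', hadj, .inr ⟨h, hh, hadj''⟩⟩
  · exact ⟨l', hl', hnadj', .inr ⟨h'', hh.trans hh'', hadj''⟩⟩

def diagOrder (G : SimpleGraph V) (box : V → Box) (d1 : ℝ) : V → V → Prop :=
  mergeRel (OnLowerDiag box d1) (fun v => (box v).x2) (MustPrecede G box d1)

theorem isStrictTotalOrder_diagOrder (hW : WeaklyTwoDiagonal box d1 d2) (hB : BiSemiProper box)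
    (hM : IsBoxModel G box) : IsStrictTotalOrder V (diagOrder G box d1) := by
  refine isStrictTotalOrder_mergeRel (fun _ _ => hW.eq_of_x2_eq)
    (fun _ _ _ _ hl hhl hl' hle => hhl.of_diagLE ⟨iff_of_true hl hl', hle⟩)
    (fun _ _ _ hh hl hhl hh' hle => ?_)
  rcases DiagLE.eq_or_diagLT hW (d1 := d1) ⟨iff_of_false hh' hh, hle⟩ with rfl | hlt
  · exact hhl
  · exact hhl.of_diagLT hW hB hM (fun e => hh (e.mpr hl)) hlt

theorem adj_of_diagOrder_of_forcesAdj (hW : WeaklyTwoDiagonal box d1 d2) (hB : BiSemiProper box)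
    (hM : IsBoxModel G box) {u v : V} (h : diagOrder G box d1 u v)
    (huv : ¬(OnLowerDiag box d1 u ↔ OnLowerDiag box d1 v)) (hforces : ForcesAdj G box d1 u v) :
    G.Adj u v := by
  rcases h with ⟨hiff, -⟩ | ⟨-, -, hnot⟩ | ⟨-, -, hmust⟩
  · exact absurd hiff huv
  · by_contra hnadj
    exact hnot ⟨u, .refl u, hnadj, hforces⟩
  · exact absurd hforces (hmust.not_forcesAdj hW hB hM huv)

theorem WeaklyTwoDiagonal.properTwoThin [Fintype V] (hW : WeaklyTwoDiagonal box d1 d2)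
    (hB : BiSemiProper box) (hM : IsBoxModel G box) : ProperTwoThin G := by
  classical
  have := isStrictTotalOrder_diagOrder hW hB hM
  obtain ⟨f, hf, hlt⟩ := exists_injective_nat_lt_iff (diagOrder G box d1)
  have hchain {u v : V} (huv : f u < f v) (h : OnLowerDiag box d1 u ↔ OnLowerDiag box d1 v) :
      DiagLT box d1 u v := ⟨h, ((hlt u v).mp huv).key_lt h⟩
  refine ⟨f, hf, fun v => if OnLowerDiag box d1 v then 0 else 1, ?_, ?_⟩
  · intro u v w huv hvw hc hwu
    replace hc := (ite_eq_ite_iff Fin.zero_ne_one).mp hc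
    refine SimpleGraph.Adj.symm ?_
    by_cases hvw' : OnLowerDiag box d1 v ↔ OnLowerDiag box d1 w
    · exact (hM.adj_of_diagLT hW hB (hchain huv hc) (hchain hvw hvw') hwu.symm).2
    · exact adj_of_diagOrder_of_forcesAdj hW hB hM ((hlt v w).mp hvw) hvw'
        (.inl ⟨u, hchain huv hc, hwu.symm⟩)
  · intro u v w huv hvw hc huw
    replace hc := (ite_eq_ite_iff Fin.zero_ne_one).mp hc
    by_cases huv' : OnLowerDiag box d1 u ↔ OnLowerDiag box d1 v
    · exact (hM.adj_of_diagLT hW hB (hchain huv huv') (hchain hvw hc) huw).1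
    · exact adj_of_diagOrder_of_forcesAdj hW hB hM ((hlt u v).mp huv) huv'
        (.inr ⟨w, hchain hvw hc, huw⟩)

end Backward

namespace ProperTwoThin

open scoped Classical

variable {V : Type*} [Fintype V] {G : SimpleGraph V} {f : V → ℕ} {c : V → Fin 2}

noncomputable def firstNbr (G : SimpleGraph V) (f : V → ℕ) (c : V → Fin 2)
    (q : Fin 2 → Fin 2 → Prop) (v : V) : ℕ :=
  (insert v (Finset.univ.filter fun z => G.Adj v z ∧ q (c z) (c v))).inf'
    (Finset.insert_nonempty _ _) f

variable {q : Fin 2 → Fin 2 → Prop}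

theorem firstNbr_le_self (v : V) : firstNbr G f c q v ≤ f v :=
  Finset.inf'_le _ (Finset.mem_insert_self _ _)

theorem firstNbr_le {v z : V} (h : G.Adj v z) (hq : q (c z) (c v)) : firstNbr G f c q v ≤ f z :=
  Finset.inf'_le _ (Finset.mem_insert_of_mem (by simp [h, hq]))

theorem firstNbr_eq (v : V) :
    firstNbr G f c q v = f v ∨ ∃ z, G.Adj v z ∧ q (c z) (c v) ∧ firstNbr G f c q v = f z := by
  obtain ⟨z, hz, heq⟩ := Finset.exists_mem_eq_inf' (Finset.insert_nonempty v
    (Finset.univ.filter fun z => G.Adj v z ∧ q (c z) (c v))) f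
  rw [Finset.mem_insert, Finset.mem_filter] at hz
  rcases hz with rfl | ⟨-, hadj, hq⟩
  · exact .inl heq
  · exact .inr ⟨z, hadj, hq, heq⟩

theorem firstNbr_mono (hrev : RevConsistentWith G f c) {u v : V} (hc : c u = c v)
    (hlt : f u < f v) : firstNbr G f c q u ≤ firstNbr G f c q v := by
  rcases firstNbr_eq (G := G) (f := f) (c := c) (q := q) v with h | ⟨z, hadj, hq, h⟩
  · exact h ▸ (firstNbr_le_self u).trans hlt.le
  · rw [h]
    rcases le_or_gt (f u) (f z) with hle | hzu
    · exact (firstNbr_le_self u).trans hle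
    · exact firstNbr_le (hrev z u v hzu hlt hc hadj.symm).symm (hc ▸ hq)

theorem adj_of_firstNbr_le (hinj : Function.Injective f) (hcons : ConsistentWith G f c)
    {u v : V} (hq : ∀ a, q a (c v) → a = c u) (hlt : f u < f v)
    (h : firstNbr G f c q v ≤ f u) : G.Adj v u := by
  rcases firstNbr_eq (G := G) (f := f) (c := c) (q := q) v with h' | ⟨z, hadj, hqz, h'⟩
  · exact absurd (h' ▸ h) hlt.not_ge
  · rcases (h' ▸ h).eq_or_lt with hzu | hzu
    · exact hinj hzu ▸ hadj
    · exact hcons z u v hzu hlt (hq _ hqz) hadj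

theorem adj_iff_firstNbr_of_eq (hinj : Function.Injective f) (hcons : ConsistentWith G f c)
    {u v : V} (hc : c u = c v) (hlt : f u < f v) :
    G.Adj u v ↔ firstNbr G f c (· = ·) v ≤ f u :=
  ⟨fun h => firstNbr_le h.symm hc,
    fun h => (adj_of_firstNbr_le hinj hcons (fun _ ha => ha.trans hc.symm) hlt h).symm⟩

theorem adj_iff_firstNbr_of_ne (hinj : Function.Injective f) (hcons : ConsistentWith G f c)
    {u v : V} (hc : c u ≠ c v) :
    G.Adj u v ↔ firstNbr G f c (· ≠ ·) u ≤ f v ∧ firstNbr G f c (· ≠ ·) v ≤ f u := by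
  refine ⟨fun h => ⟨firstNbr_le h (Ne.symm hc), firstNbr_le h.symm hc⟩, fun ⟨hu, hv⟩ => ?_⟩
  have hfne : f u ≠ f v := fun h => hc (congrArg c (hinj h))
  rcases hfne.lt_or_gt with hlt | hlt
  · exact (adj_of_firstNbr_le hinj hcons (fun _ ha => by omega) hlt hv).symm
  · exact adj_of_firstNbr_le hinj hcons (fun _ ha => by omega) hlt hu

noncomputable def bound (f : V → ℕ) : ℝ := (Finset.univ.sup f : ℕ) + 1

theorem lt_bound (v : V) : (f v : ℝ) < bound f := by
  have : (f v : ℝ) ≤ (Finset.univ.sup f : ℕ) := Nat.cast_le.mpr (Finset.le_sup (Finset.mem_univ v))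
  rw [bound]; linarith

/-- With `ℓ` and `m` the first positions of a neighbour in the own and in the other class, a
same-class edge `u v` with `f u < f v` is read off as `ℓ v ≤ f u` from the `y`-intervals of the
lower and the `x`-intervals of the upper class, a cross edge as `m u ≤ f v ∧ m v ≤ f u` from the
lower-left corners; the shift by `bound f` makes every other comparison hold automatically. -/
noncomputable def modelBox (G : SimpleGraph V) (f : V → ℕ) (c : V → Fin 2) (v : V) : Box :=
  if c v = 0 then
    ⟨firstNbr G f c (· ≠ ·) v - bound f, f v, firstNbr G f c (· = ·) v - bound f, f v - bound f⟩
  else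
    ⟨firstNbr G f c (· = ·) v - bound f, f v - bound f, firstNbr G f c (· ≠ ·) v - bound f, f v⟩

theorem modelBox_of_eq_zero {v : V} (h : c v = 0) : modelBox G f c v =
    ⟨firstNbr G f c (· ≠ ·) v - bound f, f v, firstNbr G f c (· = ·) v - bound f, f v - bound f⟩ :=
  if_pos h

theorem modelBox_of_eq_one {v : V} (h : c v = 1) : modelBox G f c v =
    ⟨firstNbr G f c (· = ·) v - bound f, f v - bound f, firstNbr G f c (· ≠ ·) v - bound f, f v⟩ :=
  if_neg (by rw [h]; decide)

theorem firstNbr_cast_le (G : SimpleGraph V) (f : V → ℕ) (c : V → Fin 2) (q : Fin 2 → Fin 2 → Prop)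
    (v : V) : (firstNbr G f c q v : ℝ) ≤ f v :=
  Nat.cast_le.mpr (firstNbr_le_self v)

theorem modelBox_valid (v : V) : (modelBox G f c v).x1 ≤ (modelBox G f c v).x2 ∧
    (modelBox G f c v).y1 ≤ (modelBox G f c v).y2 := by
  have := lt_bound (f := f) v
  have := firstNbr_cast_le G f c (· = ·) v
  have := firstNbr_cast_le G f c (· ≠ ·) v
  have := Nat.cast_nonneg (α := ℝ) (f v)
  rcases Fin.eq_zero_or_eq_one (c v) with h | h
  · rw [modelBox_of_eq_zero h]; constructor <;> dsimp only <;> linarith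
  · rw [modelBox_of_eq_one h]; constructor <;> dsimp only <;> linarith

theorem adj_iff_reaches_of_eq (hinj : Function.Injective f) (hcons : ConsistentWith G f c)
    {u v : V} (hc : c u = c v) (hlt : f u < f v) :
    G.Adj u v ↔ (modelBox G f c u).Reaches (modelBox G f c v) ∧
      (modelBox G f c v).Reaches (modelBox G f c u) := by
  rw [adj_iff_firstNbr_of_eq hinj hcons hc hlt, ← Nat.cast_le (α := ℝ)]
  have hlt' : (f u : ℝ) < f v := Nat.cast_lt.mpr hlt
  have := lt_bound (f := f) u
  have := lt_bound (f := f) v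
  have := firstNbr_cast_le G f c (· = ·) u
  have := firstNbr_cast_le G f c (· ≠ ·) u
  have := firstNbr_cast_le G f c (· ≠ ·) v
  have := Nat.cast_nonneg (α := ℝ) (f u)
  rcases Fin.eq_zero_or_eq_one (c u) with h | h
  · rw [modelBox_of_eq_zero h, modelBox_of_eq_zero (hc ▸ h)]
    simp only [Box.Reaches]
    constructor
    · intro h; refine ⟨⟨?_, ?_⟩, ?_, ?_⟩ <;> linarith
    · rintro ⟨-, -, h⟩; linarith
  · rw [modelBox_of_eq_one h, modelBox_of_eq_one (hc ▸ h)]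
    simp only [Box.Reaches]
    constructor
    · intro h; refine ⟨⟨?_, ?_⟩, ?_, ?_⟩ <;> linarith
    · rintro ⟨-, h, -⟩; linarith

theorem adj_iff_reaches_of_ne (hinj : Function.Injective f) (hcons : ConsistentWith G f c)
    {u v : V} (hu : c u = 0) (hv : c v = 1) :
    G.Adj u v ↔ (modelBox G f c u).Reaches (modelBox G f c v) ∧
      (modelBox G f c v).Reaches (modelBox G f c u) := by
  rw [adj_iff_firstNbr_of_ne hinj hcons (by rw [hu, hv]; decide), ← Nat.cast_le (α := ℝ),
    ← Nat.cast_le (α := ℝ), modelBox_of_eq_zero hu, modelBox_of_eq_one hv]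
  have := lt_bound (f := f) u
  have := lt_bound (f := f) v
  have := firstNbr_cast_le G f c (· = ·) u
  have := firstNbr_cast_le G f c (· = ·) v
  have := Nat.cast_nonneg (α := ℝ) (f u)
  have := Nat.cast_nonneg (α := ℝ) (f v)
  simp only [Box.Reaches]
  constructor
  · rintro ⟨h1, h2⟩; refine ⟨⟨?_, ?_⟩, ?_, ?_⟩ <;> linarith
  · rintro ⟨⟨h1, -⟩, -, h2⟩; constructor <;> linarith

theorem isBoxModel_modelBox (hinj : Function.Injective f) (hcons : ConsistentWith G f c) :
    IsBoxModel G (modelBox G f c) := by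
  refine ⟨modelBox_valid, fun u v huv => ?_⟩
  rw [Box.toSet_inter_nonempty_iff (modelBox_valid u) (modelBox_valid v)]
  have swap : (G.Adj v u ↔ (modelBox G f c v).Reaches (modelBox G f c u) ∧
      (modelBox G f c u).Reaches (modelBox G f c v)) →
      (G.Adj u v ↔ (modelBox G f c u).Reaches (modelBox G f c v) ∧
        (modelBox G f c v).Reaches (modelBox G f c u)) := fun h => by
    rw [G.adj_comm, and_comm]; exact h
  by_cases hc : c u = c v
  · rcases (hinj.ne huv).lt_or_gt with hlt | hlt
    · exact adj_iff_reaches_of_eq hinj hcons hc hlt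
    · exact swap (adj_iff_reaches_of_eq hinj hcons hc.symm hlt)
  · rcases Fin.eq_zero_or_eq_one (c u) with hu | hu
    · exact adj_iff_reaches_of_ne hinj hcons hu (by omega)
    · exact swap (adj_iff_reaches_of_ne hinj hcons (by omega) hu)

theorem bound_pos (f : V → ℕ) : 0 < bound f := by
  rw [bound]; positivity

theorem modelBox_diag (v : V) :
    (c v = 0 ∧ (modelBox G f c v).y2 = (modelBox G f c v).x2 + -bound f) ∨
      (c v = 1 ∧ (modelBox G f c v).y2 = (modelBox G f c v).x2 + bound f) := by
  rcases Fin.eq_zero_or_eq_one (c v) with h | h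
  · exact .inl ⟨h, by rw [modelBox_of_eq_zero h]; ring⟩
  · exact .inr ⟨h, by rw [modelBox_of_eq_one h]; ring⟩

theorem eq_of_modelBox_offset_eq {u v : V}
    (h : (modelBox G f c u).y2 - (modelBox G f c u).x2 =
      (modelBox G f c v).y2 - (modelBox G f c v).x2) : c u = c v := by
  have := bound_pos f
  rcases modelBox_diag (G := G) (f := f) (c := c) u with ⟨hu, hu'⟩ | ⟨hu, hu'⟩ <;>
    rcases modelBox_diag (G := G) (f := f) (c := c) v with ⟨hv, hv'⟩ | ⟨hv, hv'⟩
  all_goals first | (exfalso; linarith) | rw [hu, hv]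

theorem twoDiagonal_modelBox (hinj : Function.Injective f) :
    TwoDiagonal (modelBox G f c) (-bound f) (bound f) := by
  refine ⟨neg_lt_zero.mpr (bound_pos f), bound_pos f, fun u v huv heq => huv (hinj ?_),
    fun v => ?_⟩
  · rw [Prod.mk.injEq] at heq
    have hc := eq_of_modelBox_offset_eq (G := G) (f := f) (c := c) (u := u) (v := v)
      (by rw [heq.1, heq.2])
    rcases Fin.eq_zero_or_eq_one (c u) with hu | hu
    · have hx := heq.1
      rw [modelBox_of_eq_zero hu, modelBox_of_eq_zero (hc ▸ hu)] at hx
      dsimp only at hx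
      exact_mod_cast hx
    · have hy := heq.2
      rw [modelBox_of_eq_one hu, modelBox_of_eq_one (hc ▸ hu)] at hy
      dsimp only at hy
      exact_mod_cast hy
  · have := lt_bound (f := f) v
    have := Nat.cast_nonneg (α := ℝ) (f v)
    rcases Fin.eq_zero_or_eq_one (c v) with h | h
    · rw [modelBox_of_eq_zero h]
      exact .inl ⟨by ring, this, by dsimp only; linarith⟩
    · rw [modelBox_of_eq_one h]
      exact .inr ⟨by ring, by dsimp only; linarith, this⟩

theorem blocking_modelBox : Blocking (modelBox G f c) (-bound f) (bound f) := by
  intro u v hu hv _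
  have := bound_pos f
  replace hu : c u = 1 := by
    rcases modelBox_diag (G := G) (f := f) (c := c) u with ⟨-, h⟩ | ⟨h, -⟩
    · linarith
    · exact h
  replace hv : c v = 0 := by
    rcases modelBox_diag (G := G) (f := f) (c := c) v with ⟨h, -⟩ | ⟨-, h⟩
    · exact h
    · linarith
  rw [Box.vert_inter_toSet_nonempty_iff_s15 (modelBox_valid u).1 (modelBox_valid v),
    Box.horiz_inter_toSet_nonempty_iff_s15 (modelBox_valid v).2 (modelBox_valid u),
    modelBox_of_eq_one hu, modelBox_of_eq_zero hv]
  have := lt_bound (f := f) u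
  have := lt_bound (f := f) v
  have := firstNbr_cast_le G f c (· = ·) u
  have := firstNbr_cast_le G f c (· = ·) v
  have := firstNbr_cast_le G f c (· ≠ ·) u
  have := firstNbr_cast_le G f c (· ≠ ·) v
  have := Nat.cast_nonneg (α := ℝ) (f u)
  have := Nat.cast_nonneg (α := ℝ) (f v)
  dsimp only
  rcases le_or_gt (firstNbr G f c (· ≠ ·) v : ℝ) (f u) with h | h
  · exact .inl ⟨by linarith, by linarith⟩
  · exact .inr ⟨by linarith, by linarith⟩

theorem biSemiProper_modelBox (hrev : RevConsistentWith G f c) :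
    BiSemiProper (modelBox G f c) := by
  intro u v hoff hlt
  have hc := eq_of_modelBox_offset_eq hoff
  have hmono : ∀ q, (firstNbr G f c q u : ℝ) ≤ firstNbr G f c q v := fun q => by
    refine Nat.cast_le.mpr (firstNbr_mono hrev hc ?_)
    rcases Fin.eq_zero_or_eq_one (c u) with hu | hu
    · rw [modelBox_of_eq_zero hu, modelBox_of_eq_zero (hc ▸ hu)] at hlt
      dsimp only at hlt
      exact_mod_cast hlt
    · rw [modelBox_of_eq_one hu, modelBox_of_eq_one (hc ▸ hu)] at hlt
      dsimp only at hlt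
      exact_mod_cast (sub_lt_sub_iff_right _).mp hlt
  have h1 := hmono (· = ·)
  have h2 := hmono (· ≠ ·)
  rcases Fin.eq_zero_or_eq_one (c u) with hu | hu
  · rw [modelBox_of_eq_zero hu, modelBox_of_eq_zero (hc ▸ hu)]
    exact ⟨by dsimp only; linarith, by dsimp only; linarith⟩
  · rw [modelBox_of_eq_one hu, modelBox_of_eq_one (hc ▸ hu)]
    exact ⟨by dsimp only; linarith, by dsimp only; linarith⟩

theorem exists_twoDiagonal_model (h : ProperTwoThin G) :
    ∃ (box : V → Box) (d1 d2 : ℝ), TwoDiagonal box d1 d2 ∧ Blocking box d1 d2 ∧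
      BiSemiProper box ∧ IsBoxModel G box := by
  obtain ⟨f, hinj, c, hcons, hrev⟩ := h
  exact ⟨modelBox G f c, -bound f, bound f, twoDiagonal_modelBox hinj, blocking_modelBox,
    biSemiProper_modelBox hrev, isBoxModel_modelBox hinj hcons⟩

end ProperTwoThin

theorem TwoDiagonal.weaklyTwoDiagonal {V : Type*} {box : V → Box} {d1 d2 : ℝ}
    (h : TwoDiagonal box d1 d2) : WeaklyTwoDiagonal box d1 d2 :=
  ⟨h.1.trans h.2.1, h.2.2.1, fun v => (h.2.2.2 v).imp (·.1) (·.1)⟩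

/-- A graph `G` is proper 2-thin if and only if it has a bi-semi-proper weakly
2-diagonal box intersection model; equivalently, if and only if it has a bi-semi-proper
blocking 2-diagonal model. -/
theorem properTwoThin_iff_models {V : Type*} [Fintype V] (G : SimpleGraph V) :
    (ProperTwoThin G ↔ ∃ (box : V → Box) (d1 d2 : ℝ),
        WeaklyTwoDiagonal box d1 d2 ∧ BiSemiProper box ∧ IsBoxModel G box) ∧
    (ProperTwoThin G ↔ ∃ (box : V → Box) (d1 d2 : ℝ),
        TwoDiagonal box d1 d2 ∧ Blocking box d1 d2 ∧ BiSemiProper box ∧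
          IsBoxModel G box) := by
  refine ⟨⟨fun h => ?_, fun ⟨_, _, _, hW, hB, hM⟩ => hW.properTwoThin hB hM⟩,
    ⟨ProperTwoThin.exists_twoDiagonal_model,
      fun ⟨_, _, _, hT, _, hB, hM⟩ => hT.weaklyTwoDiagonal.properTwoThin hB hM⟩⟩
  obtain ⟨box, d1, d2, hT, -, hB, hM⟩ := ProperTwoThin.exists_twoDiagonal_model h
  exact ⟨box, d1, d2, hT.weaklyTwoDiagonal, hB, hM⟩
end

section
/- A graph G is independent 2-thin if and only if G is bipartite and admits a bipartition (V^1,V^2) with linear orders on V^1 and V^2 such that the bipartite patterns R_2 and R_3 do not occur. -/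
/-- `G` is independent 2-thin: it admits a vertex ordering and a partition into two
independent classes consistent with the ordering. -/
def IndepTwoThin {V : Type*} (G : SimpleGraph V) : Prop :=
  ∃ f : V → ℕ, Function.Injective f ∧ ∃ c : V → Fin 2,
    ConsistentWith G f c ∧ ∀ u v : V, c u = c v → ¬ G.Adj u v

/-- The bipartite pattern `R₂` occurs (for part orders given by `f`): `a₁ < a₂` in one
part and `b₁ < b₂` in the other with `a₁b₂, a₂b₁` edges and `a₂b₂` a non-edge. -/
def OccursR2 {V : Type*} (G : SimpleGraph V) (c : V → Fin 2) (f : V → ℕ) : Prop :=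
  ∃ a1 a2 b1 b2 : V, c a1 = c a2 ∧ c b1 = c b2 ∧ c a1 ≠ c b1 ∧
    f a1 < f a2 ∧ f b1 < f b2 ∧ G.Adj a1 b2 ∧ G.Adj a2 b1 ∧ ¬ G.Adj a2 b2

/-- The bipartite pattern `R₃` occurs: `a₁ < a₂ < a₃` in one part, `b₁ < b₂ < b₃` in
the other, with `a₁b₃, a₃b₁, a₃b₃` edges and `a₂b₃, a₃b₂` non-edges. -/
def OccursR3 {V : Type*} (G : SimpleGraph V) (c : V → Fin 2) (f : V → ℕ) : Prop :=
  ∃ a1 a2 a3 b1 b2 b3 : V, c a1 = c a2 ∧ c a2 = c a3 ∧ c b1 = c b2 ∧ c b2 = c b3 ∧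
    c a1 ≠ c b1 ∧ f a1 < f a2 ∧ f a2 < f a3 ∧ f b1 < f b2 ∧ f b2 < f b3 ∧
    G.Adj a1 b3 ∧ G.Adj a3 b1 ∧ G.Adj a3 b3 ∧ ¬ G.Adj a2 b3 ∧ ¬ G.Adj a3 b2

/-!
A consistent ordering restricts to orders of the two classes in which neither pattern occurs:
wherever the last vertex of one class is placed relative to the other class, consistency turns
one of the prescribed non-edges into an edge.

Conversely, build the ordering from the back. A vertex of the set `S` still to be ordered may be
placed after all of `S` if it is the last vertex of its class in `S` and its neighbours in each
class form a final segment. If the last vertices `a` and `b` of the two classes both failed the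
second condition, each would witness a gap (adjacent to some `x` but not to a later `y` of the
other class); the two gaps form `R₃` if `a` and `b` are adjacent and `R₂` otherwise.
-/

open Finset

section Patterns

variable {V : Type*} {G : SimpleGraph V} {f : V → ℕ} {c : V → Fin 2}

theorem ConsistentWith.not_occursR2 (hcons : ConsistentWith G f c) (hf : Function.Injective f) :
    ¬ OccursR2 G c f := by
  rintro ⟨a1, a2, b1, b2, ha, hb, hab, hfa, hfb, h12, h21, hn22⟩
  have hne : f a2 ≠ f b2 := hf.ne (ne_of_apply_ne c (by rwa [← ha, ← hb]))
  rcases hne.lt_or_gt with h | h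
  · exact hn22 (hcons a1 a2 b2 hfa h ha h12.symm).symm
  · exact hn22 (hcons b1 b2 a2 hfb h hb h21)

theorem ConsistentWith.not_occursR3 (hcons : ConsistentWith G f c) (hf : Function.Injective f) :
    ¬ OccursR3 G c f := by
  rintro ⟨a1, a2, a3, b1, b2, b3, ha12, ha23, hb12, hb23, hab, hfa12, hfa23, hfb12, hfb23,
    h13, h31, -, hn23, hn32⟩
  have hb3a2 : f b3 < f a2 := by
    refine (hf.ne (ne_of_apply_ne c ?_)).lt_or_gt.resolve_left fun h => ?_
    · rwa [← ha12, ← hb23, ← hb12]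
    · exact hn23 (hcons a1 a2 b3 hfa12 h ha12 h13.symm).symm
  have ha3b2 : f a3 < f b2 := by
    refine (hf.ne (ne_of_apply_ne c ?_)).lt_or_gt.resolve_right fun h => ?_
    · rwa [← ha23, ← ha12, ← hb12]
    · exact hn32 (hcons b1 b2 a3 hfb12 h hb12 h31)
  omega

end Patterns

section Greedy

variable {V K : Type*} {G : SimpleGraph V} {f g : V → ℕ}

def IsClassTopOn (c : V → K) (f : V → ℕ) (S : Finset V) (x : V) : Prop :=
  ∀ y ∈ S, c y = c x → f y ≤ f x

def NeighborsUpClosedOn (G : SimpleGraph V) (c : V → K) (f : V → ℕ) (S : Finset V) (x : V) :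
    Prop :=
  ∀ u ∈ S, ∀ v ∈ S, c u = c v → f u ≤ f v → G.Adj x u → G.Adj x v

structure IsConsistentMergeOn (G : SimpleGraph V) (c : V → K) (f g : V → ℕ) (S : Finset V) :
    Prop where
  injOn : Set.InjOn g S
  lt_of_lt : ∀ u ∈ S, ∀ v ∈ S, c u = c v → f u < f v → g u < g v
  consistent : ∀ u ∈ S, ∀ v ∈ S, ∀ w ∈ S, g u < g v → g v < g w → c u = c v →
    G.Adj w u → G.Adj w v

theorem IsConsistentMergeOn.insert_update [DecidableEq V] {c : V → K} {T : Finset V} {x : V}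
    {n : ℕ} (h : IsConsistentMergeOn G c f g T) (hxT : x ∉ T) (hn : ∀ y ∈ T, g y < n)
    (htop : IsClassTopOn c f (insert x T) x) (hup : NeighborsUpClosedOn G c f (insert x T) x) :
    IsConsistentMergeOn G c f (Function.update g x n) (insert x T) := by
  set g' := Function.update g x n
  have hgx : g' x = n := Function.update_self ..
  have hgT : ∀ y ∈ T, g' y = g y := fun y hy =>
    Function.update_of_ne (ne_of_mem_of_not_mem hy hxT) ..
  have hle : ∀ y ∈ insert x T, g' y ≤ n := by
    intro y hy
    rcases mem_insert.1 hy with rfl | hy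
    · exact hgx.le
    · exact (hgT y hy).trans_lt (hn y hy) |>.le
  refine ⟨?_, ?_, ?_⟩
  · rw [coe_insert, Set.injOn_insert (by simpa)]
    refine ⟨h.injOn.congr fun y hy => (hgT y hy).symm, ?_⟩
    rintro ⟨y, hy, hyx⟩
    exact (hn y hy).ne (by rw [← hgT y hy, hyx, hgx])
  · intro u hu' v hv' huv hfuv
    rcases mem_insert.1 hu' with rfl | hu <;> rcases mem_insert.1 hv' with rfl | hv
    · exact absurd hfuv (lt_irrefl _)
    · exact absurd (htop v (mem_insert_of_mem hv) huv.symm) (not_le.2 hfuv)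
    · rw [hgx, hgT u hu]; exact hn u hu
    · rw [hgT u hu, hgT v hv]; exact h.lt_of_lt u hu v hv huv hfuv
  · intro u hu' v hv' w hw' hguv hgvw huv hwu
    rcases mem_insert.1 hu' with rfl | hu
    · exact absurd (hgx ▸ hguv) (hle v hv').not_gt
    rcases mem_insert.1 hv' with rfl | hv
    · exact absurd (hgx ▸ hgvw) (hle w hw').not_gt
    rcases mem_insert.1 hw' with rfl | hw
    · rw [hgT u hu, hgT v hv] at hguv
      have hfuv : f u ≤ f v := not_lt.1 fun hfvu =>
        (h.lt_of_lt v hv u hu huv.symm hfvu).asymm hguv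
      exact hup u (mem_insert_of_mem hu) v (mem_insert_of_mem hv) huv hfuv hwu
    · rw [hgT u hu, hgT v hv] at hguv
      rw [hgT v hv, hgT w hw] at hgvw
      exact h.consistent u hu v hv w hw hguv hgvw huv hwu

theorem exists_isClassTopOn (c : V → K) (f : V → ℕ) {S : Finset V} {z : V} (hz : z ∈ S) :
    ∃ a ∈ S, c a = c z ∧ IsClassTopOn c f S a := by
  classical
  obtain ⟨a, ha, hmax⟩ := (S.filter (c · = c z)).exists_max_image f ⟨z, by simp [hz]⟩
  rw [mem_filter] at ha
  exact ⟨a, ha.1, ha.2, fun y hy hya => hmax y (mem_filter.2 ⟨hy, hya.trans ha.2⟩)⟩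

variable {c : V → Fin 2}

theorem occursR2_or_occursR3_of_not_neighborsUpClosedOn (hc : ∀ u v, G.Adj u v → c u ≠ c v)
    (hf : Function.Injective f) {S : Finset V} {a b : V} (hab : c a ≠ c b)
    (ha : IsClassTopOn c f S a) (hb : IsClassTopOn c f S b)
    (ha' : ¬ NeighborsUpClosedOn G c f S a) (hb' : ¬ NeighborsUpClosedOn G c f S b) :
    OccursR2 G c f ∨ OccursR3 G c f := by
  simp only [NeighborsUpClosedOn, not_forall, exists_prop] at ha' hb'
  obtain ⟨x, -, y, hy, hxy, hfxy, hax, hay⟩ := ha'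
  obtain ⟨u, -, v, hv, huv, hfuv, hbu, hbv⟩ := hb'
  replace hfxy : f x < f y := hfxy.lt_of_ne (hf.ne fun h => hay (h ▸ hax))
  replace hfuv : f u < f v := hfuv.lt_of_ne (hf.ne fun h => hbv (h ▸ hbu))
  -- in `Fin 2`, two classes both different from a third one coincide
  have hxb : c x = c b := by have := hc a x hax; omega
  have hua : c u = c a := by have := hc b u hbu; omega
  have hfva : f v ≤ f a := ha v hv (huv ▸ hua)
  have hfyb : f y ≤ f b := hb y hy (hxy ▸ hxb)
  have hux : c u ≠ c x := by rwa [hua, hxb]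
  by_cases hab' : G.Adj a b
  · have hfva' : f v < f a := hfva.lt_of_ne (hf.ne fun h => hbv (h ▸ hab'.symm))
    have hfyb' : f y < f b := hfyb.lt_of_ne (hf.ne fun h => hay (h ▸ hab'))
    exact Or.inr ⟨u, v, a, x, y, b, huv, huv.symm.trans hua, hxy, hxy.symm.trans hxb, hux, hfuv,
      hfva', hfxy, hfyb', hbu.symm, hax, hab', fun h => hbv h.symm, hay⟩
  · exact Or.inl ⟨u, a, x, b, hua, hxb, hux, hfuv.trans_le hfva, hfxy.trans_le hfyb,
      hbu.symm, hax, hab'⟩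

theorem exists_isClassTopOn_neighborsUpClosedOn (hc : ∀ u v, G.Adj u v → c u ≠ c v)
    (hf : Function.Injective f) (hR2 : ¬ OccursR2 G c f) (hR3 : ¬ OccursR3 G c f)
    {S : Finset V} (hS : S.Nonempty) :
    ∃ x ∈ S, IsClassTopOn c f S x ∧ NeighborsUpClosedOn G c f S x := by
  obtain ⟨z, hz⟩ := hS
  obtain ⟨a, haS, -, ha⟩ := exists_isClassTopOn c f hz
  by_cases ha' : NeighborsUpClosedOn G c f S a
  · exact ⟨a, haS, ha, ha'⟩
  obtain ⟨x, hxS, hax⟩ : ∃ x ∈ S, G.Adj a x := by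
    by_contra! h
    exact ha' fun u hu _ _ _ _ hau => absurd hau (h u hu)
  obtain ⟨b, hbS, hbx, hb⟩ := exists_isClassTopOn c f hxS
  by_cases hb' : NeighborsUpClosedOn G c f S b
  · exact ⟨b, hbS, hb, hb'⟩
  have hab : c a ≠ c b := hbx ▸ hc a x hax
  exact (occursR2_or_occursR3_of_not_neighborsUpClosedOn hc hf hab ha hb ha' hb').elim
    hR2 hR3 |>.elim

theorem exists_isConsistentMergeOn [DecidableEq V] (hc : ∀ u v, G.Adj u v → c u ≠ c v)
    (hf : Function.Injective f) (hR2 : ¬ OccursR2 G c f) (hR3 : ¬ OccursR3 G c f)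
    (S : Finset V) : ∃ g, IsConsistentMergeOn G c f g S := by
  induction S using Finset.strongInduction with
  | H S ih =>
  rcases S.eq_empty_or_nonempty with rfl | hS
  · exact ⟨fun _ => 0, by simp, by simp, by simp⟩
  obtain ⟨x, hx, htop, hup⟩ := exists_isClassTopOn_neighborsUpClosedOn hc hf hR2 hR3 hS
  obtain ⟨g, hg⟩ := ih _ (erase_ssubset hx)
  rw [← insert_erase hx] at htop hup ⊢
  exact ⟨_, hg.insert_update (notMem_erase x S)
    (fun y hy => Nat.lt_succ_of_le (le_sup hy)) htop hup⟩

end Greedy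

/-- A graph `G` is independent 2-thin if and only if `G` is bipartite and admits a
bipartition `(V¹, V²)` with linear orders on `V¹` and `V²` such that the bipartite
patterns `R₂` and `R₃` do not occur. -/
theorem indepTwoThin_iff_bipartite_avoids_R2_R3 {V : Type*} [Fintype V]
    (G : SimpleGraph V) :
    IndepTwoThin G ↔ ∃ c : V → Fin 2, (∀ u v : V, G.Adj u v → c u ≠ c v) ∧
      ∃ f : V → ℕ, Function.Injective f ∧ ¬ OccursR2 G c f ∧ ¬ OccursR3 G c f := by
  constructor
  · rintro ⟨f, hf, c, hcons, hindep⟩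
    exact ⟨c, fun u v huv h => hindep u v h huv, f, hf, hcons.not_occursR2 hf,
      hcons.not_occursR3 hf⟩
  · rintro ⟨c, hc, f, hf, hR2, hR3⟩
    classical
    obtain ⟨g, hg⟩ := exists_isConsistentMergeOn hc hf hR2 hR3 univ
    exact ⟨g, fun u v => hg.injOn (mem_univ u) (mem_univ v), c,
      fun u v w => hg.consistent u (mem_univ u) v (mem_univ v) w (mem_univ w),
      fun u v huv hadj => hc u v hadj huv⟩
end
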